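/- arXiv:2202.12054 — 11 statements merged into one kernel-verified Lean document; each statement's English description precedes it below -/
import Mathlib

section
/- Let G be a finite abelian group and Γ ⊆ End(G) with {id, −id} ⊆ Γ. The seminormalization of the monoid ℬ_Γ(G) inside ℱ(G) equals the set of sequences S over G such that S^m ∈ ℬ_Γ(G) for some odd m ∈ ℕ. In particular, if g ∈ G has odd order then the one-element sequence g lies in the seminormalization of ℬ_Γ(G). -/
def IsWZS {G : Type*} [AddCommGroup G] (Γ : Set (G →+ G)) (S : Multiset G) : Prop :=
  ∃ T : Multiset (G × (G →+ G)),
    (∀ p ∈ T, p.2 ∈ Γ) ∧ T.map Prod.fst = S ∧ (T.map fun p => p.2 p.1).sum = 0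

def sigmaSet {G : Type*} [AddCommGroup G] (Γ : Set (G →+ G)) (S : Multiset G) : Set G :=
  {x | ∃ T : Multiset (G × (G →+ G)),
    (∀ p ∈ T, p.2 ∈ Γ) ∧ T.map Prod.fst = S ∧ (T.map fun p => p.2 p.1).sum = x}

def pmWeights (G : Type*) [AddCommGroup G] : Set (G →+ G) :=
  {AddMonoidHom.id G, -(AddMonoidHom.id G)}

def autWeights (G : Type*) [AddCommGroup G] : Set (G →+ G) :=
  {f : G →+ G | Function.Bijective ⇑f}

def IsAtomPM {G : Type*} [AddCommGroup G] (S : Multiset G) : Prop :=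
  S ≠ 0 ∧ IsWZS (pmWeights G) S ∧
    ∀ A B : Multiset G, IsWZS (pmWeights G) A → IsWZS (pmWeights G) B →
      A + B = S → A = 0 ∨ B = 0

def LSet {G : Type*} [AddCommGroup G] (B : Multiset G) : Set ℕ :=
  {ℓ | ∃ l : List (Multiset G), (∀ A ∈ l, IsAtomPM A) ∧ l.sum = B ∧ l.length = ℓ}

def BOver {G : Type*} [AddCommGroup G] (Γ : Set (G →+ G)) (G₀ : Set G) : Set (Multiset G) :=
  {S | (∀ g ∈ S, g ∈ G₀) ∧ IsWZS Γ S}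

def IsBasisTuple {G : Type*} [AddCommGroup G] {r : ℕ} (e : Fin r → G) : Prop :=
  (∀ i, e i ≠ 0) ∧
  (∀ m : Fin r → ℤ, (∑ i, m i • e i) = 0 → ∀ i, m i • e i = 0) ∧
  AddSubgroup.closure (Set.range e) = ⊤

/-!
If `±id ∈ Γ`, then `S * S` is a `Γ`-weighted zero-sum sequence for every `S` (give one copy of
`S` the weight `id` and the other `-id`), so every even power of `S` lies in `ℬ_Γ(G)`. Hence
`Sⁿ ∈ ℬ_Γ(G)` for all large `n` as soon as a single odd power does, and conversely. For `g` of
odd order `m`, the sequence `gᵐ` already has sum zero.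
-/

section WeightedZeroSum

variable {G : Type*} [AddCommGroup G] {Γ : Set (G →+ G)}

variable (Γ) in
def weightedZeroSumSubmonoid : AddSubmonoid (Multiset G) where
  carrier := {S | IsWZS Γ S}
  zero_mem' := ⟨0, by simp⟩
  add_mem' := by
    rintro A B ⟨T, hT, rfl, hTsum⟩ ⟨U, hU, rfl, hUsum⟩
    refine ⟨T + U, fun p hp => ?_, by simp, by simp [hTsum, hUsum]⟩
    rcases Multiset.mem_add.mp hp with hp | hp
    exacts [hT p hp, hU p hp]

theorem IsWZS.nsmul {S : Multiset G} (hS : IsWZS Γ S) (n : ℕ) : IsWZS Γ (n • S) :=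
  (weightedZeroSumSubmonoid Γ).nsmul_mem hS n

theorem isWZS_of_sum_eq_zero (h1 : AddMonoidHom.id G ∈ Γ) {S : Multiset G} (hS : S.sum = 0) :
    IsWZS Γ S :=
  ⟨S.map fun g => (g, AddMonoidHom.id G), by simpa using fun _ _ => h1,
    by simp [Multiset.map_map], by simpa [Multiset.map_map] using hS⟩

theorem isWZS_add_self (h1 : AddMonoidHom.id G ∈ Γ) (h2 : -(AddMonoidHom.id G) ∈ Γ)
    (S : Multiset G) : IsWZS Γ (S + S) := by
  refine ⟨S.map (fun g => (g, AddMonoidHom.id G)) + S.map (fun g => (g, -(AddMonoidHom.id G))),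
    fun p hp => ?_, by simp [Multiset.map_map], ?_⟩
  · rcases Multiset.mem_add.mp hp with hp | hp <;> obtain ⟨g, -, rfl⟩ := Multiset.mem_map.mp hp
    exacts [h1, h2]
  · simp [Multiset.map_map, Function.comp_def, Multiset.sum_map_neg']

theorem isWZS_nsmul_of_even (h1 : AddMonoidHom.id G ∈ Γ) (h2 : -(AddMonoidHom.id G) ∈ Γ)
    {n : ℕ} (hn : Even n) (S : Multiset G) : IsWZS Γ (n • S) := by
  obtain ⟨k, rfl⟩ := hn
  rw [add_nsmul, ← smul_add]
  exact (isWZS_add_self h1 h2 S).nsmul k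

theorem isWZS_nsmul_of_odd_le (h1 : AddMonoidHom.id G ∈ Γ) (h2 : -(AddMonoidHom.id G) ∈ Γ)
    {S : Multiset G} {m n : ℕ} (hm : Odd m) (hS : IsWZS Γ (m • S)) (hmn : m ≤ n) :
    IsWZS Γ (n • S) := by
  rcases Nat.even_or_odd n with hn | hn
  · exact isWZS_nsmul_of_even h1 h2 hn S
  · have hdiff : Even (n - m) := (Nat.even_sub hmn).mpr
      (iff_of_false (Nat.not_even_iff_odd.mpr hn) (Nat.not_even_iff_odd.mpr hm))
    rw [← Nat.sub_add_cancel hmn, add_nsmul]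
    exact (weightedZeroSumSubmonoid Γ).add_mem (isWZS_nsmul_of_even h1 h2 hdiff S) hS

end WeightedZeroSum

theorem stmt3_general {G : Type*} [AddCommGroup G] (Γ : Set (G →+ G))
    (h1 : AddMonoidHom.id G ∈ Γ) (h2 : -(AddMonoidHom.id G) ∈ Γ) :
    ({S : Multiset G | ∃ N : ℕ, ∀ n ≥ N, IsWZS Γ (n • S)}
      = {S : Multiset G | ∃ m : ℕ, Odd m ∧ IsWZS Γ (m • S)})
    ∧ ∀ g : G, Odd (addOrderOf g) →
        ∃ N : ℕ, ∀ n ≥ N, IsWZS Γ (n • ({g} : Multiset G)) := by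
  have hseminormal : {S : Multiset G | ∃ N : ℕ, ∀ n ≥ N, IsWZS Γ (n • S)}
      = {S : Multiset G | ∃ m : ℕ, Odd m ∧ IsWZS Γ (m • S)} := by
    ext S
    constructor
    · rintro ⟨N, hN⟩
      exact ⟨2 * N + 1, odd_two_mul_add_one N, hN _ (by omega)⟩
    · rintro ⟨m, hm, hS⟩
      exact ⟨m, fun n hn => isWZS_nsmul_of_odd_le h1 h2 hm hS hn⟩
  refine ⟨hseminormal, fun g hg => ?_⟩
  have hpow : IsWZS Γ (addOrderOf g • ({g} : Multiset G)) :=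
    isWZS_of_sum_eq_zero h1 <| by
      rw [Multiset.sum_nsmul, Multiset.sum_singleton, addOrderOf_nsmul_eq_zero]
  have hodd : ({g} : Multiset G) ∈ {S : Multiset G | ∃ m : ℕ, Odd m ∧ IsWZS Γ (m • S)} :=
    ⟨_, hg, hpow⟩
  rwa [← hseminormal] at hodd

theorem stmt3 {G : Type*} [AddCommGroup G] [Fintype G] (Γ : Set (G →+ G))
    (h1 : AddMonoidHom.id G ∈ Γ) (h2 : -(AddMonoidHom.id G) ∈ Γ) :
    ({S : Multiset G | ∃ N : ℕ, ∀ n ≥ N, IsWZS Γ (n • S)}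
      = {S : Multiset G | ∃ m : ℕ, Odd m ∧ IsWZS Γ (m • S)})
    ∧ ∀ g : G, Odd (addOrderOf g) →
        ∃ N : ℕ, ∀ n ≥ N, IsWZS Γ (n • ({g} : Multiset G)) :=
  stmt3_general Γ h1 h2
end

section
/- Let G be a finite abelian group with {id, −id} ⊆ Γ ⊆ Aut(G). If there exists g ∈ G of odd order n ≥ 3 with both g and −g considered, then the monoid ℬ_Γ(G) is not weakly Krull: the element g belongs to the intersection of all localizations of ℬ_Γ(G) at minimal prime s-ideals but not to ℬ_Γ(G). -/
/-! The one-element sequence `g` is not Γ-weighted zero-sum, since every weight is injective and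
`g ≠ 0`. Yet for each `h` it becomes one after adding `n - 1` copies of some `x ≠ h`, where `n` is
the (odd) order of `g`: take `x = g`, or `x = -g` weighted by `-id` when `h = g`. As `n - 1` is
even, these `n - 1` copies are themselves zero-sum by pairing each `x` with a `-x`. -/

section WeightedZeroSum

variable {G : Type*} [AddCommGroup G] {Γ : Set (G →+ G)}

lemma eq_zero_of_isWZS_singleton (hinj : ∀ γ ∈ Γ, Function.Injective γ) {g : G}
    (hg : IsWZS Γ {g}) : g = 0 := by
  obtain ⟨T, hΓ, hfst, hsum⟩ := hg
  obtain ⟨⟨x, γ⟩, rfl, rfl⟩ := Multiset.map_eq_singleton.mp hfst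
  simp only [Multiset.map_singleton, Multiset.sum_singleton] at hsum
  exact hinj γ (hΓ _ (Multiset.mem_singleton_self _)) (by simpa using hsum)

lemma isWZS_replicate_two_mul (h1 : AddMonoidHom.id G ∈ Γ) (h2 : -(AddMonoidHom.id G) ∈ Γ)
    (x : G) (m : ℕ) : IsWZS Γ (Multiset.replicate (2 * m) x) := by
  refine ⟨Multiset.replicate m (x, AddMonoidHom.id G) +
      Multiset.replicate m (x, -(AddMonoidHom.id G)), ?_, ?_, ?_⟩
  · intro p hp
    rcases Multiset.mem_add.mp hp with hp | hp <;>
      rw [Multiset.eq_of_mem_replicate hp] <;> assumption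
  · simp [Multiset.map_replicate, ← Multiset.replicate_add, two_mul]
  · simp [Multiset.map_replicate, Multiset.sum_replicate]

lemma isWZS_cons_replicate (h1 : AddMonoidHom.id G ∈ Γ) {γ : G →+ G} (hγ : γ ∈ Γ)
    {g x : G} (hx : γ x = g) {n : ℕ} (hn : (n + 1) • g = 0) :
    IsWZS Γ (g ::ₘ Multiset.replicate n x) := by
  refine ⟨(g, AddMonoidHom.id G) ::ₘ Multiset.replicate n (x, γ), ?_, ?_, ?_⟩
  · intro p hp
    rcases Multiset.mem_cons.mp hp with rfl | hp
    · exact h1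
    · rw [Multiset.eq_of_mem_replicate hp]
      exact hγ
  · simp [Multiset.map_replicate]
  · simpa [Multiset.map_replicate, Multiset.sum_replicate, hx, succ_nsmul'] using hn

end WeightedZeroSum

lemma neg_ne_self_of_odd_addOrderOf {G : Type*} [AddGroup G] {g : G} (hg : g ≠ 0)
    (hodd : Odd (addOrderOf g)) : -g ≠ g := by
  intro h
  have hdvd : addOrderOf g ∣ 2 :=
    addOrderOf_dvd_of_nsmul_eq_zero (by rw [two_nsmul]; nth_rw 1 [← h]; exact neg_add_cancel g)
  rcases (Nat.dvd_prime Nat.prime_two).mp hdvd with h1 | h2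
  · exact hg (AddMonoid.addOrderOf_eq_one_iff.mp h1)
  · exact Nat.not_odd_iff_even.mpr (h2 ▸ even_two) hodd

theorem stmt4_general {G : Type*} [AddCommGroup G] [DecidableEq G] (Γ : Set (G →+ G))
    (h1 : AddMonoidHom.id G ∈ Γ) (h2 : -(AddMonoidHom.id G) ∈ Γ)
    (hAut : ∀ γ ∈ Γ, Function.Bijective ⇑γ)
    (g : G) (hodd : Odd (addOrderOf g)) (h3 : 3 ≤ addOrderOf g) :
    ¬ IsWZS Γ ({g} : Multiset G) ∧
      ∀ h : G, ∃ A B : Multiset G, IsWZS Γ A ∧ IsWZS Γ B ∧ B.count h = 0 ∧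
        ({g} : Multiset G) + B = A := by
  have hg : g ≠ 0 := by
    rintro rfl
    simp at h3
  refine ⟨fun hwzs => hg (eq_zero_of_isWZS_singleton (fun γ hγ => (hAut γ hγ).1) hwzs), ?_⟩
  intro h
  obtain ⟨γ, hγ, x, hx, hxh⟩ : ∃ γ ∈ Γ, ∃ x, γ x = g ∧ x ≠ h := by
    by_cases hh : h = g
    · subst hh
      exact ⟨_, h2, -h, by simp, neg_ne_self_of_odd_addOrderOf hg hodd⟩
    · exact ⟨_, h1, g, rfl, Ne.symm hh⟩
  obtain ⟨m, hm⟩ := hodd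
  refine ⟨_, Multiset.replicate (2 * m) x, isWZS_cons_replicate h1 hγ hx
      (hm ▸ addOrderOf_nsmul_eq_zero g), isWZS_replicate_two_mul h1 h2 x m,
    Multiset.count_eq_zero.mpr fun hmem => hxh (Multiset.eq_of_mem_replicate hmem).symm,
    Multiset.singleton_add _ _⟩

theorem stmt4 {G : Type*} [AddCommGroup G] [Fintype G] [DecidableEq G] (Γ : Set (G →+ G))
    (h1 : AddMonoidHom.id G ∈ Γ) (h2 : -(AddMonoidHom.id G) ∈ Γ)
    (hAut : ∀ γ ∈ Γ, Function.Bijective ⇑γ)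
    (g : G) (hodd : Odd (addOrderOf g)) (h3 : 3 ≤ addOrderOf g) :
    ¬ IsWZS Γ ({g} : Multiset G) ∧
      ∀ h : G, ∃ A B : Multiset G, IsWZS Γ A ∧ IsWZS Γ B ∧ B.count h = 0 ∧
        ({g} : Multiset G) + B = A :=
  stmt4_general Γ h1 h2 hAut g hodd h3
end

section
/- Let G be a finite abelian group. The divisor-closed submonoids of ℬ_Γ(G₀), for nonempty G₀ ⊆ G and nonempty Γ ⊆ End(G), are exactly the monoids ℬ_Γ(G₁) for subsets G₁ ⊆ G₀. -/
/-! Let `H` be a divisor-closed submonoid of `ℬ_Γ(G₀)` and `G₁` the set of elements occurring in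
members of `H`; clearly `H ⊆ ℬ_Γ(G₁)`. Conversely, let `S = g₁ ⋯ gₗ ∈ ℬ_Γ(G₁)` with weights
`γ₁, …, γₗ` and pick `Bᵢ ∈ H` containing `gᵢ`. With `n = |G|`, the sequence `S` divides
`B₁ⁿ ⋯ Bₗⁿ ∈ H`, and the cofactor `∏ Bᵢⁿ gᵢ⁻¹` is a weighted zero-sum sequence: weighting the whole
`i`-th block by `γᵢ` gives `γᵢ(n σ(Bᵢ) - gᵢ) = -γᵢ(gᵢ)`, and these add up to `0`.
Divisor-closedness then puts `S` into `H`. -/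

section WeightedSums

variable {G : Type*} [AddCommGroup G] {Γ : Set (G →+ G)}

theorem zero_mem_sigmaSet_zero : (0 : G) ∈ sigmaSet Γ 0 :=
  ⟨0, by simp, rfl, rfl⟩

theorem add_mem_sigmaSet_add {S R : Multiset G} {x y : G} (hx : x ∈ sigmaSet Γ S)
    (hy : y ∈ sigmaSet Γ R) : x + y ∈ sigmaSet Γ (S + R) := by
  obtain ⟨T, hTΓ, rfl, rfl⟩ := hx
  obtain ⟨U, hUΓ, rfl, rfl⟩ := hy
  refine ⟨T + U, fun p hp => ?_, Multiset.map_add _ _ _, by simp⟩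
  rcases Multiset.mem_add.mp hp with hp | hp
  exacts [hTΓ p hp, hUΓ p hp]

theorem multiset_sum_mem_sigmaSet_sum {ι : Type*} (s : Multiset ι) {f : ι → G}
    {F : ι → Multiset G} (h : ∀ i ∈ s, f i ∈ sigmaSet Γ (F i)) :
    (s.map f).sum ∈ sigmaSet Γ (s.map F).sum := by
  induction s using Multiset.induction with
  | empty => exact zero_mem_sigmaSet_zero
  | cons i s ih =>
    simp only [Multiset.map_cons, Multiset.sum_cons]
    exact add_mem_sigmaSet_add (h i (Multiset.mem_cons_self i s))
      (ih fun j hj => h j (Multiset.mem_cons_of_mem hj))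

theorem map_sum_mem_sigmaSet {γ : G →+ G} (hγ : γ ∈ Γ) (S : Multiset G) :
    γ S.sum ∈ sigmaSet Γ S :=
  ⟨S.map (·, γ), by simp [hγ], by simp [Multiset.map_map], by
    simp [Multiset.map_map, map_multiset_sum]⟩

theorem IsWZS.add {S R : Multiset G} (hS : IsWZS Γ S) (hR : IsWZS Γ R) : IsWZS Γ (S + R) := by
  have h := add_mem_sigmaSet_add (x := 0) (y := 0) hS hR
  rwa [add_zero] at h

theorem IsWZS.exists_add_eq_nsmul_sum {n : ℕ} (hn : n ≠ 0) (hnG : ∀ x : G, n • x = 0)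
    {S : Multiset G} (hS : IsWZS Γ S) {B : G → Multiset G} (hB : ∀ g ∈ S, g ∈ B g) :
    ∃ c, IsWZS Γ c ∧ S + c = n • (S.map B).sum := by
  classical
  obtain ⟨T, hTΓ, rfl, hT0⟩ := hS
  have hmem : ∀ p ∈ T, p.1 ∈ n • B p.1 := fun p hp =>
    Multiset.mem_nsmul.mpr ⟨hn, hB p.1 (Multiset.mem_map_of_mem _ hp)⟩
  refine ⟨(T.map fun p => (n • B p.1).erase p.1).sum, ?_, ?_⟩
  · have hblock : ∀ p ∈ T, p.2 ((n • B p.1).erase p.1).sum = -p.2 p.1 := by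
      intro p hp
      have hsum := Multiset.sum_erase (hmem p hp)
      rw [Multiset.sum_nsmul, hnG] at hsum
      rw [← neg_eq_of_add_eq_zero_right hsum, map_neg]
    have h := multiset_sum_mem_sigmaSet_sum T fun p hp =>
      map_sum_mem_sigmaSet (hTΓ p hp) ((n • B p.1).erase p.1)
    rwa [Multiset.map_congr rfl hblock, Multiset.sum_map_neg, hT0, neg_zero] at h
  · calc T.map Prod.fst + (T.map fun p => (n • B p.1).erase p.1).sum
        = (T.map fun p => {p.1} + (n • B p.1).erase p.1).sum := by
          rw [Multiset.sum_map_add, ← Multiset.sum_map_singleton (T.map Prod.fst),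
            Multiset.map_map]
          rfl
      _ = (T.map fun p => n • B p.1).sum := by
          refine congrArg _ (Multiset.map_congr rfl fun p hp => ?_)
          rw [Multiset.singleton_add, Multiset.cons_erase (hmem p hp)]
      _ = n • ((T.map Prod.fst).map B).sum := by
          rw [Multiset.map_map, ← Multiset.sum_map_nsmul]
          rfl

end WeightedSums

section BOver

variable {G : Type*} [AddCommGroup G] {Γ : Set (G →+ G)} {G₀ G₁ : Set G}

theorem bOver_mono (h : G₁ ⊆ G₀) : BOver Γ G₁ ⊆ BOver Γ G₀ :=
  fun _ hS => ⟨fun g hg => h (hS.1 g hg), hS.2⟩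

theorem zero_mem_bOver : 0 ∈ BOver Γ G₀ :=
  ⟨fun _ hg => absurd hg (Multiset.notMem_zero _), zero_mem_sigmaSet_zero⟩

theorem add_mem_bOver {S R : Multiset G} (hS : S ∈ BOver Γ G₀) (hR : R ∈ BOver Γ G₀) :
    S + R ∈ BOver Γ G₀ :=
  ⟨fun g hg => (Multiset.mem_add.mp hg).elim (hS.1 g) (hR.1 g), hS.2.add hR.2⟩

theorem mem_bOver_of_add_mem {S R : Multiset G} (hS : IsWZS Γ S) (h : S + R ∈ BOver Γ G₀) :
    S ∈ BOver Γ G₀ :=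
  ⟨fun g hg => h.1 g (Multiset.mem_add.mpr (Or.inl hg)), hS⟩

end BOver

def elementsOf {α : Type*} (H : Set (Multiset α)) : Set α :=
  {g | ∃ S ∈ H, g ∈ S}

theorem bOver_elementsOf_subset {G : Type*} [AddCommGroup G] [Fintype G] {Γ : Set (G →+ G)}
    {G₀ : Set G} {H : Set (Multiset G)} (hsub : H ⊆ BOver Γ G₀) (h0 : 0 ∈ H)
    (hadd : ∀ a ∈ H, ∀ b ∈ H, a + b ∈ H)
    (hdvd : ∀ a ∈ BOver Γ G₀, ∀ b ∈ H, (∃ c ∈ BOver Γ G₀, a + c = b) → a ∈ H) :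
    BOver Γ (elementsOf H) ⊆ H := by
  let M : AddSubmonoid (Multiset G) :=
    { carrier := H, add_mem' := fun ha hb => hadd _ ha _ hb, zero_mem' := h0 }
  rintro S ⟨hSH, hS⟩
  choose! B hBH hgB using hSH
  obtain ⟨c, hc, hSc⟩ :=
    hS.exists_add_eq_nsmul_sum Fintype.card_ne_zero (fun _ => card_nsmul_eq_zero) hgB
  have hprod : Fintype.card G • (S.map B).sum ∈ H :=
    M.nsmul_mem (M.multiset_sum_mem _ fun b hb => by
      obtain ⟨g, hg, rfl⟩ := Multiset.mem_map.mp hb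
      exact hBH g hg) _
  have hcS : c + S ∈ BOver Γ G₀ := by
    rw [add_comm, hSc]
    exact hsub hprod
  exact hdvd S ⟨fun g hg => (hsub (hBH g hg)).1 g (hgB g hg), hS⟩ _ hprod
    ⟨c, mem_bOver_of_add_mem hc hcS, hSc⟩

theorem stmt5_general {G : Type*} [AddCommGroup G] [Fintype G]
    (Γ : Set (G →+ G)) (G₀ : Set G)
    (H : Set (Multiset G)) :
    (H ⊆ BOver Γ G₀ ∧ 0 ∈ H ∧ (∀ a ∈ H, ∀ b ∈ H, a + b ∈ H) ∧
      (∀ a ∈ BOver Γ G₀, ∀ b ∈ H, (∃ c ∈ BOver Γ G₀, a + c = b) → a ∈ H))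
    ↔ ∃ G₁ ⊆ G₀, H = BOver Γ G₁ := by
  constructor
  · rintro ⟨hsub, h0, hadd, hdvd⟩
    refine ⟨elementsOf H, fun g ⟨S, hS, hgS⟩ => (hsub hS).1 g hgS, ?_⟩
    refine (bOver_elementsOf_subset hsub h0 hadd hdvd).antisymm' fun S hS => ?_
    exact ⟨fun g hg => ⟨S, hS, hg⟩, (hsub hS).2⟩
  · rintro ⟨G₁, hG₁, rfl⟩
    refine ⟨bOver_mono hG₁, zero_mem_bOver, fun a ha b hb => add_mem_bOver ha hb, ?_⟩
    rintro a ha b hb ⟨c, -, rfl⟩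
    exact mem_bOver_of_add_mem ha.2 hb

theorem stmt5 {G : Type*} [AddCommGroup G] [Fintype G]
    (Γ : Set (G →+ G)) (hΓ : Γ.Nonempty) (G₀ : Set G) (hG₀ : G₀.Nonempty)
    (H : Set (Multiset G)) :
    (H ⊆ BOver Γ G₀ ∧ 0 ∈ H ∧ (∀ a ∈ H, ∀ b ∈ H, a + b ∈ H) ∧
      (∀ a ∈ BOver Γ G₀, ∀ b ∈ H, (∃ c ∈ BOver Γ G₀, a + c = b) → a ∈ H))
    ↔ ∃ G₁ ⊆ G₀, H = BOver Γ G₁ :=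
  stmt5_general Γ G₀ H
end

section
/- Let G be a finite abelian group whose exponent is not a power of 2, and {id,−id} ⊆ Γ ⊆ Aut(G). Then the monoid ℬ_Γ(G) of Γ-weighted zero-sum sequences over G is not seminormal. -/
section WeightedZeroSum

variable {G : Type*} [AddCommGroup G] {Γ : Set (G →+ G)}

theorem not_isWZS_singleton (hinj : ∀ γ ∈ Γ, Function.Injective ⇑γ) {g : G} (hg : g ≠ 0) :
    ¬ IsWZS Γ {g} := by
  rintro ⟨T, hΓ, hfst, hsum⟩
  obtain ⟨q, rfl, rfl⟩ := Multiset.map_eq_singleton.1 hfst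
  simp only [Multiset.map_singleton, Multiset.sum_singleton] at hsum
  exact hg (hinj q.2 (hΓ q (Multiset.mem_singleton_self q)) (hsum.trans (map_zero q.2).symm))

theorem isWZS_replicate_add_of_nsmul_eq (h1 : AddMonoidHom.id G ∈ Γ)
    (h2 : -(AddMonoidHom.id G) ∈ Γ) {g : G} {a b : ℕ} (h : a • g = b • g) :
    IsWZS Γ (Multiset.replicate (a + b) g) := by
  refine ⟨Multiset.replicate a (g, AddMonoidHom.id G)
      + Multiset.replicate b (g, -(AddMonoidHom.id G)), ?_, ?_, ?_⟩
  · intro p hp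
    rcases Multiset.mem_add.1 hp with hp | hp <;>
      rw [Multiset.eq_of_mem_replicate hp] <;> assumption
  · simp [Multiset.map_replicate, Multiset.replicate_add]
  · simp [Multiset.map_replicate, Multiset.sum_replicate, h]

theorem isWZS_replicate_of_odd_addOrderOf (h1 : AddMonoidHom.id G ∈ Γ)
    (h2 : -(AddMonoidHom.id G) ∈ Γ) {g : G} (hodd : Odd (addOrderOf g)) {n : ℕ}
    (hn : addOrderOf g ≤ n) : IsWZS Γ (Multiset.replicate n g) := by
  rcases Nat.even_or_odd n with ⟨k, rfl⟩ | hn_odd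
  · exact isWZS_replicate_add_of_nsmul_eq h1 h2 rfl
  · obtain ⟨k, rfl⟩ : ∃ k, n = (k + addOrderOf g) + k := by
      obtain ⟨m, rfl⟩ := hn_odd
      obtain ⟨m', hm'⟩ := hodd
      exact ⟨(2 * m + 1 - addOrderOf g) / 2, by omega⟩
    refine isWZS_replicate_add_of_nsmul_eq h1 h2 ?_
    rw [add_nsmul, addOrderOf_nsmul_eq_zero, add_zero]

end WeightedZeroSum

theorem exists_ne_zero_odd_addOrderOf {G : Type*} [AddCommGroup G] [Fintype G]
    (hexp : ¬ ∃ k : ℕ, AddMonoid.exponent G = 2 ^ k) :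
    ∃ g : G, g ≠ 0 ∧ Odd (addOrderOf g) := by
  obtain ⟨p, hp, hdvd, hodd⟩ :=
    (AddMonoid.exponent G).eq_two_pow_or_exists_odd_prime_and_dvd.resolve_left hexp
  have : Fact p.Prime := ⟨hp⟩
  obtain ⟨g, hg⟩ := exists_prime_addOrderOf_dvd_card p (hdvd.trans AddGroup.exponent_dvd_card)
  refine ⟨g, fun h => hp.one_lt.ne' ?_, hg ▸ hodd⟩
  rw [← hg, h, addOrderOf_zero]

theorem stmt7 {G : Type*} [AddCommGroup G] [Fintype G] (Γ : Set (G →+ G))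
    (h1 : AddMonoidHom.id G ∈ Γ) (h2 : -(AddMonoidHom.id G) ∈ Γ)
    (hAut : ∀ γ ∈ Γ, Function.Bijective ⇑γ)
    (hexp : ¬ ∃ k : ℕ, AddMonoid.exponent G = 2 ^ k) :
    ¬ ∀ S : Multiset G, (∃ N : ℕ, ∀ n ≥ N, IsWZS Γ (n • S)) → IsWZS Γ S := by
  obtain ⟨g, hg, hodd⟩ := exists_ne_zero_odd_addOrderOf hexp
  intro hseminormal
  refine not_isWZS_singleton (fun γ hγ => (hAut γ hγ).injective) hg (hseminormal {g} ?_)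
  refine ⟨addOrderOf g, fun n hn => ?_⟩
  rw [Multiset.nsmul_singleton]
  exact isWZS_replicate_of_odd_addOrderOf h1 h2 hodd hn
end

section
/- Let G be a finite abelian group. The plus-minus weighted zero-sum monoid ℬ_±(G) is seminormal if and only if exp(G) divides 4. -/
/-!
Write ℬ for `pmZeroSums G`, the sequences that split into two parts of equal sum; it contains
every `2 • S`. For each `g`, the splitting `3 • {g, 3g} = {g, g, g, 3g} + {3g, 3g}` puts
`n • {g, 3g}` in ℬ for all `n ≥ 2`, whereas the signed sums of `{g, 3g}` itself are `±2g` and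
`±4g`: seminormality forces `4g = 0`. Conversely, let `4G = 0` and `n` be odd. A splitting of
`n • S` has signed sum `∑ k_g • g` with `k_g ≡ n * count g S ≡ count g S (mod 2)`; since
`count g S ≥ 1`, the copies of `g` in `S` can be split so that their signed count is congruent
to `k_g` mod 4, and as `k_g` only matters mod 4 this gives a splitting of `S` with equal sums.
-/

theorem exists_add_eq_and_sub_modEq_four {m : ℕ} (hm : 0 < m) {k : ℤ} (hk : k ≡ m [ZMOD 2]) :
    ∃ a b : ℕ, a + b = m ∧ (a : ℤ) - b ≡ k [ZMOD 4] := by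
  unfold Int.ModEq at *
  by_cases h : (k - m) % 4 = 0
  · exact ⟨m, 0, rfl, by omega⟩
  · exact ⟨m - 1, 1, by omega, by omega⟩

section PlusMinus

variable {G : Type*} [AddCommGroup G]

theorem isWZS_pmWeights_iff {S : Multiset G} :
    IsWZS (pmWeights G) S ↔ ∃ A B : Multiset G, A + B = S ∧ A.sum = B.sum := by
  classical
  constructor
  · rintro ⟨T, hT, rfl, hsum⟩
    set p : G × (G →+ G) → Prop := fun q => q.2 = AddMonoidHom.id G
    refine ⟨(T.filter p).map Prod.fst, (T.filter (¬ p ·)).map Prod.fst,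
      by rw [← Multiset.map_add, Multiset.filter_add_not], ?_⟩
    have hplus : (T.filter p).map (fun q => q.2 q.1) = (T.filter p).map Prod.fst :=
      Multiset.map_congr rfl fun q hq => by rw [(Multiset.mem_filter.1 hq).2]; rfl
    have hminus : (T.filter (¬ p ·)).map (fun q => q.2 q.1) =
        ((T.filter (¬ p ·)).map Prod.fst).map Neg.neg := by
      rw [Multiset.map_map]
      refine Multiset.map_congr rfl fun q hq => ?_
      obtain ⟨hqT, hqp⟩ := Multiset.mem_filter.1 hq
      obtain h | h : q.2 = _ ∨ q.2 = _ := hT q hqT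
      · exact absurd h hqp
      · simp [h]
    rwa [← Multiset.filter_add_not p T, Multiset.map_add, Multiset.sum_add, hplus, hminus,
      Multiset.sum_map_neg', ← sub_eq_add_neg, sub_eq_zero] at hsum
  · rintro ⟨A, B, rfl, hAB⟩
    refine ⟨A.map (·, AddMonoidHom.id G) + B.map (·, -AddMonoidHom.id G), ?_, ?_, ?_⟩
    · simp only [Multiset.mem_add, Multiset.mem_map]
      rintro q (⟨g, -, rfl⟩ | ⟨g, -, rfl⟩)
      exacts [Or.inl rfl, Or.inr rfl]
    · simp [Multiset.map_map]
    · simp [Multiset.map_map, Function.comp_def, Multiset.sum_map_neg', hAB]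

variable (G) in
def pmZeroSums : AddSubmonoid (Multiset G) where
  carrier := {S | IsWZS (pmWeights G) S}
  zero_mem' := isWZS_pmWeights_iff.2 ⟨0, 0, rfl, rfl⟩
  add_mem' := by
    rintro _ _ hS hT
    obtain ⟨A, B, rfl, hAB⟩ := isWZS_pmWeights_iff.1 hS
    obtain ⟨C, D, rfl, hCD⟩ := isWZS_pmWeights_iff.1 hT
    refine isWZS_pmWeights_iff.2 ⟨A + C, B + D, add_add_add_comm A C B D, ?_⟩
    rw [Multiset.sum_add, Multiset.sum_add, hAB, hCD]

theorem mem_pmZeroSums {S : Multiset G} :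
    S ∈ pmZeroSums G ↔ ∃ A B : Multiset G, A + B = S ∧ A.sum = B.sum :=
  isWZS_pmWeights_iff

theorem two_nsmul_mem_pmZeroSums (S : Multiset G) : 2 • S ∈ pmZeroSums G :=
  mem_pmZeroSums.2 ⟨S, S, (two_nsmul S).symm, rfl⟩

theorem nsmul_mem_pmZeroSums_of_three_nsmul_mem {S : Multiset G} (h3 : 3 • S ∈ pmZeroSums G)
    {n : ℕ} (hn : 2 ≤ n) : n • S ∈ pmZeroSums G := by
  obtain ⟨r, rfl | rfl⟩ := Nat.even_or_odd' n
  · rw [mul_nsmul]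
    exact nsmul_mem (two_nsmul_mem_pmZeroSums S) r
  · obtain ⟨r, rfl⟩ : ∃ r', r = r' + 1 := ⟨r - 1, by omega⟩
    rw [show 2 * (r + 1) + 1 = 3 + 2 * r by ring, add_nsmul, mul_nsmul]
    exact add_mem h3 (nsmul_mem (two_nsmul_mem_pmZeroSums S) r)

theorem three_nsmul_pair_mem_pmZeroSums (g : G) :
    3 • ({g, 3 • g} : Multiset G) ∈ pmZeroSums G := by
  refine mem_pmZeroSums.2 ⟨{g, g, g, 3 • g}, {3 • g, 3 • g}, ?_, ?_⟩
  · simp [succ_nsmul, Multiset.insert_eq_cons, Multiset.cons_add, Multiset.add_cons,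
      Multiset.cons_swap]
  · simp only [Multiset.insert_eq_cons, Multiset.sum_cons, Multiset.sum_singleton]
    abel

theorem four_nsmul_eq_zero_of_pair_mem_pmZeroSums {g : G}
    (h : ({g, 3 • g} : Multiset G) ∈ pmZeroSums G) : 4 • g = 0 := by
  obtain ⟨A, B, hAB, hsum⟩ := mem_pmZeroSums.1 h
  wlog hg : g ∈ A generalizing A B
  · refine this B A (by rw [add_comm, hAB]) hsum.symm ?_
    have : g ∈ A + B := hAB ▸ Multiset.mem_cons_self g _
    simpa [hg] using this
  obtain ⟨A', rfl⟩ := Multiset.exists_cons_of_mem hg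
  rw [Multiset.insert_eq_cons, Multiset.cons_add, Multiset.cons_inj_right] at hAB
  rcases Multiset.le_singleton.1 (hAB ▸ Multiset.le_add_right A' B) with rfl | rfl
  · rw [zero_add] at hAB
    subst hAB
    simp only [Multiset.sum_cons, Multiset.sum_zero, add_zero, Multiset.sum_singleton] at hsum
    rw [show (4 : ℕ) • g = 2 • (3 • g - g) by abel, ← hsum, sub_self, smul_zero]
  · obtain rfl : B = 0 := add_eq_left.1 hAB
    simp only [Multiset.sum_cons, Multiset.sum_singleton, Multiset.sum_zero] at hsum
    rw [show (4 : ℕ) • g = g + 3 • g by abel, hsum]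

theorem sum_sub_sum_eq_sum_count_zsmul [DecidableEq G] {A B T : Multiset G} (h : A + B = T) :
    A.sum - B.sum = ∑ g ∈ T.toFinset, ((A.count g : ℤ) - B.count g) • g := by
  rw [Finset.sum_multiset_count_of_subset A T.toFinset
      (Multiset.toFinset_subset.2 (h ▸ Multiset.subset_of_le (Multiset.le_add_right A B))),
    Finset.sum_multiset_count_of_subset B T.toFinset
      (Multiset.toFinset_subset.2 (h ▸ Multiset.subset_of_le (Multiset.le_add_left B A))),
    ← Finset.sum_sub_distrib]
  exact Finset.sum_congr rfl fun g _ => by rw [sub_smul, natCast_zsmul, natCast_zsmul]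

theorem mem_pmZeroSums_of_counts [DecidableEq G] {S : Multiset G} (a b : G → ℕ)
    (hab : ∀ g ∈ S, a g + b g = S.count g)
    (hsum : ∑ g ∈ S.toFinset, ((a g : ℤ) - b g) • g = 0) : S ∈ pmZeroSums G := by
  refine mem_pmZeroSums.2
    ⟨∑ g ∈ S.toFinset, a g • {g}, ∑ g ∈ S.toFinset, b g • {g}, ?_, ?_⟩
  · conv_rhs => rw [← Multiset.toFinset_sum_count_nsmul_eq S]
    rw [← Finset.sum_add_distrib]
    exact Finset.sum_congr rfl fun g hg => by rw [← add_nsmul, hab g (Multiset.mem_toFinset.1 hg)]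
  · rw [← sub_eq_zero, Multiset.sum_sum, Multiset.sum_sum, ← Finset.sum_sub_distrib, ← hsum]
    refine Finset.sum_congr rfl fun g _ => ?_
    rw [Multiset.sum_nsmul, Multiset.sum_nsmul, Multiset.sum_singleton, sub_smul, natCast_zsmul,
      natCast_zsmul]

theorem mem_pmZeroSums_of_odd_nsmul_mem (h4 : ∀ x : G, 4 • x = 0) {n : ℕ} (hn : Odd n)
    {S : Multiset G} (h : n • S ∈ pmZeroSums G) : S ∈ pmZeroSums G := by
  classical
  obtain ⟨A, B, hAB, hsum⟩ := mem_pmZeroSums.1 h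
  have hparity (g : G) : (A.count g : ℤ) - B.count g ≡ S.count g [ZMOD 2] := by
    obtain ⟨r, rfl⟩ := hn
    have hcount : ((A.count g + B.count g : ℕ) : ℤ) = 2 * (r * S.count g) + S.count g := by
      rw [← Multiset.count_add, hAB, Multiset.count_nsmul]
      push_cast
      ring
    unfold Int.ModEq
    omega
  choose! a b hab hmod using fun g (hg : g ∈ S) =>
    exists_add_eq_and_sub_modEq_four (Multiset.count_pos.2 hg) (hparity g)
  refine mem_pmZeroSums_of_counts a b hab ?_
  calc ∑ g ∈ S.toFinset, ((a g : ℤ) - b g) • g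
      = ∑ g ∈ (n • S).toFinset, ((A.count g : ℤ) - B.count g) • g := by
        rw [Multiset.toFinset_nsmul S n hn.pos.ne']
        refine Finset.sum_congr rfl fun g hg => zsmul_eq_zsmul_iff_modEq.2 <| (hmod g ?_).of_dvd ?_
        · exact Multiset.mem_toFinset.1 hg
        · exact_mod_cast addOrderOf_dvd_of_nsmul_eq_zero (h4 g)
    _ = A.sum - B.sum := (sum_sub_sum_eq_sum_count_zsmul hAB).symm
    _ = 0 := sub_eq_zero.2 hsum

end PlusMinus

theorem stmt8_general {G : Type*} [AddCommGroup G] :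
    (∀ S : Multiset G,
        (∃ N : ℕ, ∀ n ≥ N, IsWZS (pmWeights G) (n • S)) → IsWZS (pmWeights G) S)
    ↔ AddMonoid.exponent G ∣ 4 := by
  rw [AddMonoid.exponent_dvd_iff_forall_nsmul_eq_zero]
  constructor
  · intro hsemi g
    refine four_nsmul_eq_zero_of_pair_mem_pmZeroSums (hsemi _ ⟨2, fun n hn => ?_⟩)
    exact nsmul_mem_pmZeroSums_of_three_nsmul_mem (three_nsmul_pair_mem_pmZeroSums g) hn
  · rintro h4 S ⟨N, hN⟩
    exact mem_pmZeroSums_of_odd_nsmul_mem h4 (odd_two_mul_add_one N) (hN _ (by omega))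

theorem stmt8 {G : Type*} [AddCommGroup G] [Fintype G] :
    (∀ S : Multiset G,
        (∃ N : ℕ, ∀ n ≥ N, IsWZS (pmWeights G) (n • S)) → IsWZS (pmWeights G) S)
    ↔ AddMonoid.exponent G ∣ 4 :=
  stmt8_general
end

section
/- Let G be a finite abelian group with exp(G) = 4 (so G ≅ C₂^r ⊕ C₄^t with t ≥ 1). The complete integral closure of ℬ_±(G) in ℱ(G) is {S ∈ ℱ(G) : σ(S) ∈ 2G}. -/
/-! A plus-minus weighted zero-sum sequence has sum `Σ (gᵢ - εᵢ gᵢ)`, a sum of elements `0` or `2gᵢ`,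
so it lies in `2G`; as `σ` is additive, the same holds for every `S` with `C + S ∈ ℬ_±(G)`, `C ∈ ℬ_±(G)`.
Conversely, if `σ(S) = 2g` then `S g g` and `S S` are plus-minus zero-sum (weight `+1` on the first
part, `-1` on the second), so `C = g g` works: `C S^(2m) = C (S S)^m` and `C S^(2m+1) = (C S) (S S)^m`. -/

section

variable {G : Type*} [AddCommGroup G]

namespace IsWZS

variable {Γ : Set (G →+ G)}

theorem zero : IsWZS Γ 0 :=
  ⟨0, by simp, by simp, by simp⟩

theorem add_s9 {A B : Multiset G} (hA : IsWZS Γ A) (hB : IsWZS Γ B) : IsWZS Γ (A + B) := by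
  obtain ⟨T₁, hΓ₁, rfl, hsum₁⟩ := hA
  obtain ⟨T₂, hΓ₂, rfl, hsum₂⟩ := hB
  refine ⟨T₁ + T₂, ?_, by simp, by simp [hsum₁, hsum₂]⟩
  simp only [Multiset.mem_add]
  rintro p (hp | hp)
  exacts [hΓ₁ p hp, hΓ₂ p hp]

theorem nsmul_s9 {A : Multiset G} (hA : IsWZS Γ A) (n : ℕ) : IsWZS Γ (n • A) := by
  induction n with
  | zero => simpa using zero
  | succ k ih => simpa [succ_nsmul] using ih.add_s9 hA

end IsWZS

theorem isWZS_pmWeights_add_of_sum_eq {A B : Multiset G} (h : A.sum = B.sum) :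
    IsWZS (pmWeights G) (A + B) := by
  refine ⟨A.map (·, AddMonoidHom.id G) + B.map (·, -AddMonoidHom.id G), ?_, ?_, ?_⟩
  · simp only [Multiset.mem_add, Multiset.mem_map]
    rintro p (⟨x, -, rfl⟩ | ⟨x, -, rfl⟩) <;> simp [pmWeights]
  · simp [Multiset.map_map]
  · simp [Multiset.map_map, Function.comp_def, Multiset.sum_map_neg', h]

theorem sum_mem_range_two_nsmul_of_isWZS_pmWeights {S : Multiset G}
    (h : IsWZS (pmWeights G) S) : S.sum ∈ (nsmulAddMonoidHom 2 : G →+ G).range := by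
  obtain ⟨T, hΓ, rfl, hsum⟩ := h
  have hS : (T.map Prod.fst).sum = (T.map fun p => p.1 - p.2 p.1).sum := by
    rw [Multiset.sum_map_sub, hsum, sub_zero]
  rw [hS]
  refine AddSubgroup.multiset_sum_mem _ _ fun x hx => ?_
  obtain ⟨p, hp, rfl⟩ := Multiset.mem_map.1 hx
  rcases hΓ p hp with hw | hw
  · exact ⟨0, by simp [hw]⟩
  · exact ⟨p.1, by simp [Set.mem_singleton_iff.1 hw, two_nsmul]⟩

theorem exists_sum_eq_add_self_of_isWZS_pmWeights {S : Multiset G}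
    (h : IsWZS (pmWeights G) S) : ∃ g : G, S.sum = g + g := by
  obtain ⟨g, hg⟩ := sum_mem_range_two_nsmul_of_isWZS_pmWeights h
  exact ⟨g, by simpa [two_nsmul] using hg.symm⟩

theorem isWZS_pmWeights_pair_add_nsmul {S : Multiset G} {g : G} (hg : S.sum = g + g) (n : ℕ) :
    IsWZS (pmWeights G) ({g, g} + n • S) := by
  have hC : IsWZS (pmWeights G) {g, g} := by
    simpa using isWZS_pmWeights_add_of_sum_eq (A := {g}) rfl
  have hSS : IsWZS (pmWeights G) (S + S) := isWZS_pmWeights_add_of_sum_eq rfl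
  obtain ⟨m, rfl | rfl⟩ := Nat.even_or_odd' n
  · rw [mul_nsmul, two_nsmul]
    exact hC.add_s9 (hSS.nsmul_s9 m)
  · have hCS : IsWZS (pmWeights G) ({g, g} + S) :=
      isWZS_pmWeights_add_of_sum_eq (by simp [hg])
    rw [add_nsmul, mul_nsmul, two_nsmul, one_nsmul, add_comm (m • _), ← add_assoc]
    exact hCS.add_s9 (hSS.nsmul_s9 m)

end

theorem stmt9_general {G : Type*} [AddCommGroup G] :
    {S : Multiset G | ∃ C : Multiset G, IsWZS (pmWeights G) C ∧
        ∀ n : ℕ, IsWZS (pmWeights G) (C + n • S)}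
      = {S : Multiset G | ∃ g : G, S.sum = g + g} := by
  ext S
  constructor
  · rintro ⟨C, hC, hCS⟩
    obtain ⟨c, hc⟩ := exists_sum_eq_add_self_of_isWZS_pmWeights hC
    obtain ⟨d, hd⟩ := exists_sum_eq_add_self_of_isWZS_pmWeights (hCS 1)
    refine ⟨d - c, ?_⟩
    rw [one_nsmul, Multiset.sum_add, hc] at hd
    linear_combination (norm := abel) hd
  · rintro ⟨g, hg⟩
    exact ⟨{g, g}, by simpa using isWZS_pmWeights_pair_add_nsmul hg 0,
      isWZS_pmWeights_pair_add_nsmul hg⟩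

theorem stmt9 {G : Type*} [AddCommGroup G] [Fintype G]
    (hexp : AddMonoid.exponent G = 4) :
    {S : Multiset G | ∃ C : Multiset G, IsWZS (pmWeights G) C ∧
        ∀ n : ℕ, IsWZS (pmWeights G) (C + n • S)}
      = {S : Multiset G | ∃ g : G, S.sum = g + g} :=
  stmt9_general
end

section
/- Let G ≅ C_{2^{t₁}} ⊕ … ⊕ C_{2^{t_r}} with r ∈ ℕ and t₁ < t₂ < … < t_r (all tᵢ ≥ 1), and Γ = Aut(G). Then the monoid ℬ_Γ(G) of Aut(G)-weighted zero-sum sequences over G is seminormal. Conversely, if Γ = Aut(G) and ℬ_Γ(G) is seminormal and |G| > 1, then G is a 2-group which is a direct sum of cyclic groups of pairwise distinct orders. -/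
/-!
For finite `G`, seminormality of the monoid of `Aut(G)`-weighted zero-sum sequences is equivalent
to: every sum of an odd number of automorphisms of `G` is an automorphism. Indeed, a weighted
zero-sum of `S^m` regroups into one of `S` whose weights are sums of `m` automorphisms; conversely,
the sequence `g^m` weighted by `φ₁, …, φₘ` tests whether `g` lies in the kernel of `φ₁ + ⋯ + φₘ`.

For `G = ⨁ ℤ/2^{tᵢ}` with `t₁ < ⋯ < t_r`, the elements `fⱼ = 2^{tⱼ-1} eⱼ` form a basis of the
2-torsion, and every endomorphism is triangular on it because `2^{tⱼ-1}` kills the factors of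
smaller exponent. An automorphism has all diagonal entries `2^{tⱼ-1}`, hence so has an odd sum of
automorphisms, which is therefore injective on the 2-torsion and thus injective.

Conversely, `m • id` is an automorphism for odd `m`, so `G` is a 2-group; and two cyclic factors
of equal order carry the automorphisms `-1`, `1 + n`, `1 + n'` (with `n`, `n'` the transvections
between them), whose sum `1 + n + n'` is not injective.
-/

theorem AddMonoidHom.injective_of_ker_nsmul {A B : Type*} [AddGroup A] [AddGroup B] (f : A →+ B)
    (p : ℕ) (htors : ∀ x : A, ∃ n, p ^ n • x = 0)
    (hker : ∀ x, p • x = 0 → f x = 0 → x = 0) : Function.Injective f := by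
  rw [injective_iff_map_eq_zero]
  intro x hx
  obtain ⟨n, hn⟩ := htors x
  induction n generalizing x with
  | zero => simpa using hn
  | succ n ih =>
    refine hker x (ih (p • x) (by rw [map_nsmul, hx, nsmul_zero]) ?_) hx
    rwa [← mul_nsmul, ← pow_succ']

namespace ZMod

variable {k : ℕ}

theorem two_pow_pred_add_self (hk : 1 ≤ k) : (2 ^ (k - 1) + 2 ^ (k - 1) : ZMod (2 ^ k)) = 0 := by
  rw [← two_mul, ← pow_succ', Nat.sub_add_cancel hk]
  exact_mod_cast ZMod.natCast_self (2 ^ k)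

theorem two_pow_pred_ne_zero (hk : 1 ≤ k) : (2 ^ (k - 1) : ZMod (2 ^ k)) ≠ 0 := by
  have hlt : 2 ^ (k - 1) < 2 ^ k := Nat.pow_lt_pow_right one_lt_two (by omega)
  exact_mod_cast fun h => absurd (Nat.le_of_dvd (by positivity)
    ((ZMod.natCast_eq_zero_iff _ _).1 h)) hlt.not_ge

theorem eq_zero_or_eq_two_pow_pred (hk : 1 ≤ k) {y : ZMod (2 ^ k)} (hy : y + y = 0) :
    y = 0 ∨ y = 2 ^ (k - 1) := by
  have hsplit : 2 ^ k = 2 ^ (k - 1) * 2 := by rw [← pow_succ, Nat.sub_add_cancel hk]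
  obtain ⟨c, hc⟩ : 2 ^ k ∣ y.val + y.val := by
    rw [← ZMod.natCast_eq_zero_iff]; push_cast; rwa [ZMod.natCast_zmod_val]
  have hval : y.val = 2 ^ (k - 1) * c := by
    have : y.val + y.val = 2 ^ (k - 1) * 2 * c := by rw [hc, hsplit]
    linarith
  have hc2 : c < 2 := by
    have : 2 ^ (k - 1) * c < 2 ^ (k - 1) * 2 := by rw [← hval, ← hsplit]; exact ZMod.val_lt y
    exact lt_of_mul_lt_mul_left this (Nat.zero_le _)
  rw [← ZMod.natCast_zmod_val y, hval]
  interval_cases c <;> simp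

theorem exists_eq_two_pow {n : ℕ} (hn : n ≠ 0)
    (h : ∀ m : ℕ, Odd m → ∀ y : ZMod n, m • y = 0 → y = 0) : ∃ a, n = 2 ^ a := by
  have hodd : Odd (ordCompl[2] n) :=
    Nat.odd_iff.2 (Nat.two_dvd_ne_zero.1 (Nat.not_dvd_ordCompl Nat.prime_two hn))
  have hy : ordCompl[2] n • ((2 ^ n.factorization 2 : ℕ) : ZMod n) = 0 := by
    rw [nsmul_eq_mul, ← Nat.cast_mul, mul_comm, Nat.ordProj_mul_ordCompl_eq_self,
      ZMod.natCast_self]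
  obtain ⟨a, -, ha⟩ := (Nat.dvd_prime_pow Nat.prime_two).1
    ((ZMod.natCast_eq_zero_iff _ _).1 (h _ hodd _ hy))
  exact ⟨a, ha⟩

end ZMod

theorem nsmul_eq_self_of_odd {A : Type*} [AddMonoid A] {a : A} (ha : a + a = 0) {m : ℕ}
    (hm : Odd m) : m • a = a := by
  obtain ⟨n, rfl⟩ := hm
  rw [add_nsmul, one_nsmul, mul_nsmul, two_nsmul, ha, nsmul_zero, zero_add]

theorem bijective_id_add_of_comp_self {M : Type*} [AddCommGroup M] {n : M →+ M}
    (hn : ∀ x, n (n x) = 0) : Function.Bijective ⇑(AddMonoidHom.id M + n) := by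
  refine Function.bijective_iff_has_inverse.2 ⟨fun x => x - n x, fun x => ?_, fun x => ?_⟩ <;>
    simp [hn]

theorem exists_equiv_fin_strictMono {ι α : Type*} [Fintype ι] [LinearOrder α] {a : ι → α}
    (ha : Function.Injective a) : ∃ (r : ℕ) (σ : Fin r ≃ ι), StrictMono (a ∘ σ) := by
  let b := a ∘ (Fintype.equivFin ι).symm
  refine ⟨_, (Tuple.sort b).trans (Fintype.equivFin ι).symm,
    (Tuple.monotone_sort b).strictMono_of_injective ?_⟩
  exact (ha.comp (Fintype.equivFin ι).symm.injective).comp (Tuple.sort b).injective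

section WeightedSums

variable {G H : Type*} [AddCommGroup G] [AddCommGroup H] {Γ Γ' : Set (G →+ G)}

def IsSeminormalWZS (Γ : Set (G →+ G)) : Prop :=
  ∀ S : Multiset G, (∃ m : ℕ, Odd m ∧ IsWZS Γ (m • S)) → IsWZS Γ S

def OddSumClosed (Γ : Set (G →+ G)) : Prop :=
  ∀ L : Multiset (G →+ G), (∀ φ ∈ L, φ ∈ Γ) → Odd (Multiset.card L) → L.sum ∈ Γ

theorem sigmaSet_zero : sigmaSet Γ 0 = {0} := by
  ext x
  constructor
  · rintro ⟨T, -, hT, rfl⟩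
    simp [Multiset.map_eq_zero.1 hT]
  · rintro rfl
    exact ⟨0, by simp, rfl, rfl⟩

theorem mem_sigmaSet_cons {g x : G} {S : Multiset G} :
    x ∈ sigmaSet Γ (g ::ₘ S) ↔ ∃ τ ∈ Γ, ∃ y ∈ sigmaSet Γ S, x = τ g + y := by
  classical
  constructor
  · rintro ⟨T, hΓ, hT, rfl⟩
    obtain ⟨p, hp, rfl, hS⟩ := (Multiset.map_eq_cons _ _ _ _).2 hT
    refine ⟨p.2, hΓ p hp, _, ⟨T.erase p, fun q hq => hΓ q (Multiset.mem_of_mem_erase hq), hS, rfl⟩,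
      ?_⟩
    rw [← Multiset.sum_cons, ← Multiset.map_cons (fun p : G × (G →+ G) => p.2 p.1),
      Multiset.cons_erase hp]
  · rintro ⟨τ, hτ, y, ⟨T, hΓ, rfl, rfl⟩, rfl⟩
    refine ⟨(g, τ) ::ₘ T, ?_, by simp, by simp⟩
    simpa [hτ] using hΓ

theorem isWZS_singleton_iff {g : G} : IsWZS Γ {g} ↔ ∃ τ ∈ Γ, τ g = 0 := by
  change (0 : G) ∈ sigmaSet Γ {g} ↔ _
  rw [← Multiset.cons_zero, mem_sigmaSet_cons, sigmaSet_zero]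
  simp [eq_comm]

theorem exists_of_mem_sigmaSet_replicate_add {m : ℕ} {g x : G} {R : Multiset G}
    (h : x ∈ sigmaSet Γ (Multiset.replicate m g + R)) :
    ∃ L : Multiset (G →+ G), (∀ φ ∈ L, φ ∈ Γ) ∧ Multiset.card L = m ∧
      ∃ y ∈ sigmaSet Γ R, x = L.sum g + y := by
  induction m generalizing x with
  | zero => exact ⟨0, by simp, rfl, x, by simpa using h, by simp⟩
  | succ m ih =>
    rw [Multiset.replicate_succ, Multiset.cons_add, mem_sigmaSet_cons] at h
    obtain ⟨τ, hτ, z, hz, rfl⟩ := h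
    obtain ⟨L, hL, rfl, y, hy, rfl⟩ := ih hz
    refine ⟨τ ::ₘ L, ?_, by simp, y, hy, by simp [add_assoc]⟩
    simpa [hτ] using hL

theorem sigmaSet_nsmul_subset {m : ℕ}
    (hΓ : ∀ L : Multiset (G →+ G), (∀ φ ∈ L, φ ∈ Γ) → Multiset.card L = m → L.sum ∈ Γ')
    (S : Multiset G) : sigmaSet Γ (m • S) ⊆ sigmaSet Γ' S := by
  induction S using Multiset.induction with
  | empty => simp [sigmaSet_zero]
  | cons g S ih =>
    intro x hx
    rw [← Multiset.singleton_add, nsmul_add, Multiset.nsmul_singleton] at hx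
    obtain ⟨L, hL, hcard, y, hy, rfl⟩ := exists_of_mem_sigmaSet_replicate_add hx
    exact mem_sigmaSet_cons.2 ⟨L.sum, hΓ L hL hcard, y, ih hy, rfl⟩

theorem OddSumClosed.isSeminormalWZS (h : OddSumClosed Γ) : IsSeminormalWZS Γ :=
  fun S ⟨_, hm, hS⟩ => sigmaSet_nsmul_subset (fun L hL hcard => h L hL (hcard ▸ hm)) S hS

theorem IsSeminormalWZS.injective_sum (h : IsSeminormalWZS Γ) (hΓ : ∀ φ ∈ Γ, Function.Injective φ)
    {L : Multiset (G →+ G)} (hL : ∀ φ ∈ L, φ ∈ Γ) (hodd : Odd (Multiset.card L)) :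
    Function.Injective L.sum := by
  rw [injective_iff_map_eq_zero]
  intro g hg
  have hpow : IsWZS Γ (Multiset.card L • {g}) := by
    refine ⟨L.map fun φ => (g, φ), by simpa using hL, ?_, ?_⟩
    · simp [Multiset.map_const', Multiset.nsmul_singleton]
    · rw [Multiset.map_map]
      exact (map_multiset_sum (AddMonoidHom.eval g) L).symm.trans hg
  obtain ⟨τ, hτ, hτg⟩ := isWZS_singleton_iff.1 (h {g} ⟨_, hodd, hpow⟩)
  exact (injective_iff_map_eq_zero τ).1 (hΓ τ hτ) g hτg

theorem isSeminormalWZS_autWeights_iff [Finite G] :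
    IsSeminormalWZS (autWeights G) ↔ OddSumClosed (autWeights G) :=
  ⟨fun h _ hL hodd => Finite.injective_iff_bijective.1 (h.injective_sum (fun _ hφ => hφ.1) hL hodd),
    OddSumClosed.isSeminormalWZS⟩

theorem OddSumClosed.of_addEquiv (h : OddSumClosed (autWeights G)) (e : G ≃+ H) :
    OddSumClosed (autWeights H) := by
  intro L hL hodd
  let conj : (H →+ H) ≃+ (G →+ G) :=
    e.symm.addMonoidHomCongrLeft.trans e.symm.addMonoidHomCongrRight
  have hconj : ∀ φ : H →+ H, ⇑(conj φ) = e.symm ∘ φ ∘ e := fun _ => rfl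
  have hsum := h (L.map conj) (by simpa [autWeights, hconj] using hL) (by simpa using hodd)
  rw [← map_multiset_sum] at hsum
  change Function.Bijective ⇑(conj L.sum) at hsum
  rwa [hconj, EquivLike.comp_bijective, EquivLike.bijective_comp] at hsum

theorem OddSumClosed.eq_zero_of_nsmul_eq_zero (h : OddSumClosed (autWeights G)) {m : ℕ}
    (hm : Odd m) {x : G} (hx : m • x = 0) : x = 0 := by
  have hbij : m • AddMonoidHom.id G ∈ autWeights G := by
    simpa using h (Multiset.replicate m (AddMonoidHom.id G))
      (fun φ hφ => (Multiset.eq_of_mem_replicate hφ) ▸ Function.bijective_id) (by simpa using hm)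
  exact (injective_iff_map_eq_zero _).1 hbij.injective x hx

theorem not_oddSumClosed_pi_of_addEquiv {ι : Type*} [DecidableEq ι] {A : ι → Type*}
    [∀ k, AddCommGroup (A k)] {i j : ι} (hij : i ≠ j) (c : A j ≃+ A i) [Nontrivial (A j)] :
    ¬ OddSumClosed (autWeights (∀ k, A k)) := by
  intro h
  let n : (∀ k, A k) →+ (∀ k, A k) :=
    (AddMonoidHom.single A i).comp (c.toAddMonoidHom.comp (Pi.evalAddMonoidHom A j))
  let n' : (∀ k, A k) →+ (∀ k, A k) :=
    (AddMonoidHom.single A j).comp (c.symm.toAddMonoidHom.comp (Pi.evalAddMonoidHom A i))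
  have hn : ∀ x, n x = Pi.single i (c (x j)) := fun _ => rfl
  have hn' : ∀ x, n' x = Pi.single j (c.symm (x i)) := fun _ => rfl
  have hsum := h {-AddMonoidHom.id _, AddMonoidHom.id _ + n, AddMonoidHom.id _ + n'} ?_
    (by simp [Nat.odd_iff])
  · obtain ⟨x, hx⟩ := exists_ne (0 : A j)
    -- the sum is `1 + n + n'`, which kills `c x • eᵢ - x • eⱼ`
    have hker : (Pi.single i (c x) - Pi.single j x : ∀ k, A k) = 0 := by
      refine (injective_iff_map_eq_zero _).1 hsum.injective _ ?_
      simp only [Multiset.insert_eq_cons, Multiset.sum_cons, Multiset.sum_singleton,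
        AddMonoidHom.add_apply, AddMonoidHom.neg_apply, AddMonoidHom.id_apply, hn, hn',
        Pi.sub_apply, Pi.single_eq_same, Pi.single_eq_of_ne hij, Pi.single_eq_of_ne hij.symm,
        sub_zero, zero_sub, map_neg, AddEquiv.symm_apply_apply, Pi.single_neg]
      abel
    exact hx (by simpa [Pi.single_eq_of_ne hij.symm] using congrFun hker j)
  · simp only [Multiset.insert_eq_cons, Multiset.mem_cons, Multiset.mem_singleton]
    rintro φ (rfl | rfl | rfl)
    · exact neg_involutive.bijective
    · exact bijective_id_add_of_comp_self fun x => by simp [hn, Pi.single_eq_of_ne hij.symm]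
    · exact bijective_id_add_of_comp_self fun x => by simp [hn', Pi.single_eq_of_ne hij]

end WeightedSums

section TwoGroup

variable {r : ℕ} {t : Fin r → ℕ}

variable (t) in
def twoTorsionBasis (j : Fin r) : ∀ i, ZMod (2 ^ t i) := Pi.single j (2 ^ (t j - 1))

theorem twoTorsionBasis_add_self (ht : ∀ i, 1 ≤ t i) (j : Fin r) :
    twoTorsionBasis t j + twoTorsionBasis t j = 0 := by
  rw [twoTorsionBasis, ← Pi.single_add, ZMod.two_pow_pred_add_self (ht j), Pi.single_zero]

theorem map_twoTorsionBasis_add_self (ht : ∀ i, 1 ≤ t i)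
    (φ : (∀ i : Fin r, ZMod (2 ^ t i)) →+ ∀ i : Fin r, ZMod (2 ^ t i)) (j : Fin r) :
    φ (twoTorsionBasis t j) + φ (twoTorsionBasis t j) = 0 := by
  rw [← map_add, twoTorsionBasis_add_self ht, map_zero]

theorem single_eq_twoTorsionBasis (ht : ∀ i, 1 ≤ t i) {x : ∀ i, ZMod (2 ^ t i)} (hx : x + x = 0)
    {j : Fin r} (hxj : x j ≠ 0) : Pi.single j (x j) = twoTorsionBasis t j := by
  rw [twoTorsionBasis, (ZMod.eq_zero_or_eq_two_pow_pred (ht j) (congrFun hx j)).resolve_left hxj]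

theorem apply_twoTorsionBasis_of_lt (hst : StrictMono t)
    (φ : (∀ i : Fin r, ZMod (2 ^ t i)) →+ ∀ i : Fin r, ZMod (2 ^ t i)) {i j : Fin r}
    (hij : i < j) : φ (twoTorsionBasis t j) i = 0 := by
  have hsmul : twoTorsionBasis t j = 2 ^ (t j - 1) • Pi.single j 1 := by
    rw [twoTorsionBasis, ← Pi.single_smul, nsmul_one, Nat.cast_pow, Nat.cast_ofNat]
  have hdvd : 2 ^ t i ∣ 2 ^ (t j - 1) := pow_dvd_pow 2 (by have := hst hij; omega)
  rw [hsmul, map_nsmul, Pi.smul_apply, nsmul_eq_mul, (ZMod.natCast_eq_zero_iff _ _).2 hdvd,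
    zero_mul]

theorem apply_eq_apply_single (hst : StrictMono t) (ht : ∀ i, 1 ≤ t i)
    (φ : (∀ i : Fin r, ZMod (2 ^ t i)) →+ ∀ i : Fin r, ZMod (2 ^ t i))
    {x : ∀ i, ZMod (2 ^ t i)} (hx : x + x = 0) {i : Fin r} (hlow : ∀ k < i, x k = 0) :
    φ x i = φ (Pi.single i (x i)) i := by
  conv_lhs => rw [← Finset.univ_sum_single x, map_sum, Finset.sum_apply]
  refine Finset.sum_eq_single i (fun k _ hki => ?_) (by simp)
  rcases hki.lt_or_gt with hki | hki
  · simp [hlow k hki]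
  · by_cases hxk : x k = 0
    · simp [hxk]
    · rw [single_eq_twoTorsionBasis ht hx hxk, apply_twoTorsionBasis_of_lt hst φ hki]

theorem apply_twoTorsionBasis_self_ne_zero (hst : StrictMono t) (ht : ∀ i, 1 ≤ t i)
    {φ : (∀ i : Fin r, ZMod (2 ^ t i)) →+ ∀ i : Fin r, ZMod (2 ^ t i)}
    (hφ : Function.Bijective φ) (j : Fin r) : φ (twoTorsionBasis t j) j ≠ 0 := by
  intro hj
  let ψ := (AddEquiv.ofBijective φ hφ).symm.toAddMonoidHom
  have hψ := apply_eq_apply_single hst ht ψ (map_twoTorsionBasis_add_self ht φ j)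
    (fun k hk => apply_twoTorsionBasis_of_lt hst φ hk)
  rw [hj, Pi.single_zero, map_zero, show ψ (φ _) = _ from
    (AddEquiv.ofBijective φ hφ).symm_apply_apply _] at hψ
  exact ZMod.two_pow_pred_ne_zero (ht j) (by simpa [twoTorsionBasis] using hψ)

theorem apply_twoTorsionBasis_self (hst : StrictMono t) (ht : ∀ i, 1 ≤ t i)
    {φ : (∀ i : Fin r, ZMod (2 ^ t i)) →+ ∀ i : Fin r, ZMod (2 ^ t i)}
    (hφ : Function.Bijective φ) (j : Fin r) : φ (twoTorsionBasis t j) j = 2 ^ (t j - 1) := by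
  exact (ZMod.eq_zero_or_eq_two_pow_pred (ht j)
    (congrFun (map_twoTorsionBasis_add_self ht φ j) j)).resolve_left
    (apply_twoTorsionBasis_self_ne_zero hst ht hφ j)

theorem injective_of_apply_twoTorsionBasis_self_ne_zero (hst : StrictMono t)
    (ht : ∀ i, 1 ≤ t i) {ψ : (∀ i : Fin r, ZMod (2 ^ t i)) →+ ∀ i : Fin r, ZMod (2 ^ t i)}
    (hψ : ∀ j, ψ (twoTorsionBasis t j) j ≠ 0) : Function.Injective ψ := by
  refine ψ.injective_of_ker_nsmul 2 (fun x => ⟨∑ i, t i, ?_⟩) fun x hx hψx => ?_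
  · have hcard : Fintype.card (∀ i : Fin r, ZMod (2 ^ t i)) = 2 ^ ∑ i, t i := by
      simp [Fintype.card_pi, ZMod.card, Finset.prod_pow_eq_pow_sum]
    rw [← hcard, card_nsmul_eq_zero]
  · rw [two_nsmul] at hx
    by_contra hx0
    obtain ⟨j, hxj, hmin⟩ := WellFounded.has_min wellFounded_lt {j | x j ≠ 0}
      (Function.ne_iff.1 hx0)
    have hlow : ∀ k < j, x k = 0 := fun k hk => not_not.1 fun hxk => hmin k hxk hk
    have := apply_eq_apply_single hst ht ψ hx hlow
    rw [hψx, single_eq_twoTorsionBasis ht hx hxj] at this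
    exact hψ j this.symm

theorem oddSumClosed_autWeights_pi (hst : StrictMono t) (ht : ∀ i, 1 ≤ t i) :
    OddSumClosed (autWeights (∀ i : Fin r, ZMod (2 ^ t i))) := by
  intro L hL hodd
  refine Finite.injective_iff_bijective.1
    (injective_of_apply_twoTorsionBasis_self_ne_zero hst ht fun j => ?_)
  have hsum : L.sum (twoTorsionBasis t j) j = (L.map fun φ => φ (twoTorsionBasis t j) j).sum :=
    map_multiset_sum ((Pi.evalAddMonoidHom (fun i => ZMod (2 ^ t i)) j).comp
      (AddMonoidHom.eval (twoTorsionBasis t j))) L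
  rw [hsum, Multiset.map_congr rfl fun φ hφ => apply_twoTorsionBasis_self hst ht (hL φ hφ) j,
    Multiset.map_const', Multiset.sum_replicate,
    nsmul_eq_self_of_odd (ZMod.two_pow_pred_add_self (ht j)) hodd]
  exact ZMod.two_pow_pred_ne_zero (ht j)

end TwoGroup

theorem OddSumClosed.exists_addEquiv_pi_zmod {G : Type*} [AddCommGroup G] [Finite G]
    (h : OddSumClosed (autWeights G)) :
    ∃ (r : ℕ) (t : Fin r → ℕ), StrictMono t ∧ (∀ i, 1 ≤ t i) ∧
      Nonempty (G ≃+ ((i : Fin r) → ZMod (2 ^ t i))) := by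
  classical
  obtain ⟨ι, _, n, hn, ⟨e⟩⟩ := AddCommGroup.equiv_directSum_zmod_of_finite' G
  let e₁ := e.trans (DirectSum.addEquivProd _)
  have hP := h.of_addEquiv e₁
  have hinj : Function.Injective n := fun i j hij => by
    by_contra hne
    have : Fact (1 < n j) := ⟨hn j⟩
    exact not_oddSumClosed_pi_of_addEquiv (A := fun k => ZMod (n k)) hne
      (ZMod.ringEquivCongr hij.symm).toAddEquiv hP
  have hpow : ∀ i, ∃ a, n i = 2 ^ a := fun i =>
    ZMod.exists_eq_two_pow (by have := hn i; omega) fun m hm y hy => by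
      simpa using hP.eq_zero_of_nsmul_eq_zero hm (x := Pi.single i y)
        (by rw [← Pi.single_smul, hy, Pi.single_zero])
  choose a ha using hpow
  have ha₁ : ∀ i, 1 ≤ a i := fun i =>
    Nat.one_le_iff_ne_zero.2 (Nat.one_lt_two_pow_iff.1 (ha i ▸ hn i))
  obtain ⟨r, σ, hσ⟩ := exists_equiv_fin_strictMono (a := a) fun i j hij =>
    hinj (by rw [ha, ha, hij])
  refine ⟨r, a ∘ σ, hσ, fun k => ha₁ (σ k), ⟨?_⟩⟩
  exact e₁.trans ((AddEquiv.piCongrRight fun i => (ZMod.ringEquivCongr (ha i)).toAddEquiv).trans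
    (RingEquiv.piCongrLeft (fun i => ZMod (2 ^ a i)) σ).symm.toAddEquiv)

theorem stmt10 {G : Type*} [AddCommGroup G] [Fintype G] :
    ((∃ (r : ℕ) (t : Fin r → ℕ), StrictMono t ∧ (∀ i, 1 ≤ t i) ∧
        Nonempty (G ≃+ ((i : Fin r) → ZMod (2 ^ t i)))) →
      ∀ S : Multiset G,
        (∃ m : ℕ, Odd m ∧ IsWZS (autWeights G) (m • S)) → IsWZS (autWeights G) S)
    ∧ (1 < Fintype.card G →
        (∀ S : Multiset G,
          (∃ m : ℕ, Odd m ∧ IsWZS (autWeights G) (m • S)) → IsWZS (autWeights G) S) →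
        ∃ (r : ℕ) (t : Fin r → ℕ), StrictMono t ∧ (∀ i, 1 ≤ t i) ∧
          Nonempty (G ≃+ ((i : Fin r) → ZMod (2 ^ t i)))) := by
  constructor
  · rintro ⟨r, t, hst, ht, ⟨e⟩⟩
    exact ((oddSumClosed_autWeights_pi hst ht).of_addEquiv e.symm).isSeminormalWZS
  · intro _ h
    exact (isSeminormalWZS_autWeights_iff.1 h).exists_addEquiv_pi_zmod
end

section
/- Let G be a finite abelian 2-group with basis (e₁,…,e_r) where ord(eᵢ) = 2^{tᵢ} and t₁ < … < t_r. If m ∈ [1,r], k ∈ ℕ is odd, and α ∈ ⟨e₁,…,e_{m−1}, 2e_m, e_{m+1},…,e_r⟩ with ord(α) ≤ 2^{t_m}, then (e₁,…,e_{m−1}, k·e_m + α, e_{m+1},…,e_r) is also a basis of G. -/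
open Function

section SumUpdate

variable {ι G : Type*} [Fintype ι] [DecidableEq ι] [AddCommGroup G]

lemma sum_zsmul_eq_add_sum_update_zero (v : ι → G) (n : ι → ℤ) (m : ι) :
    ∑ i, n i • v i = n m • v m + ∑ i, update n m 0 i • v i := by
  rw [Fintype.sum_eq_add_sum_compl m, Fintype.sum_eq_add_sum_compl m (fun i ↦ update n m 0 i • v i),
    update_self, zero_smul, zero_add]
  congr 1
  exact Finset.sum_congr rfl fun i hi ↦ by rw [update_of_ne (by simpa using hi)]

lemma sum_update_zero_zsmul_update (v : ι → G) (n : ι → ℤ) (m : ι) (x : G) :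
    ∑ i, update n m 0 i • update v m x i = ∑ i, update n m 0 i • v i :=
  Finset.sum_congr rfl fun i _ ↦ by rcases eq_or_ne i m with rfl | hi <;> simp [*]

lemma exists_even_of_mem_closure_update_two_nsmul {v : ι → G} {m : ι} {x : G}
    (hx : x ∈ AddSubgroup.closure (Set.range (update v m (2 • v m)))) :
    ∃ c : ι → ℤ, Even (c m) ∧ x = ∑ i, c i • v i := by
  obtain ⟨a, rfl⟩ := AddSubgroup.mem_closure_range_iff_of_fintype.mp hx
  refine ⟨update a m (2 * a m), by simp, ?_⟩
  rw [sum_zsmul_eq_add_sum_update_zero v (update a m (2 * a m)) m,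
    sum_zsmul_eq_add_sum_update_zero _ a m, sum_update_zero_zsmul_update]
  simp [update_idem, mul_smul, two_nsmul, two_zsmul]

end SumUpdate

lemma addOrderOf_dvd_prime_pow_of_le {G : Type*} [AddCommGroup G] {p n : ℕ} [hp : Fact p.Prime]
    {x : G} (hx : x ∈ AddCommGroup.primaryComponent G p) (hle : addOrderOf x ≤ p ^ n) :
    addOrderOf x ∣ p ^ n := by
  obtain ⟨s, hs⟩ := AddCommGroup.mem_primaryComponent_iff_addOrderOf.mp hx
  rw [hs] at hle ⊢
  exact pow_dvd_pow p ((Nat.pow_le_pow_iff_right hp.out.one_lt).mp hle)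

section BasisExchange

variable {G : Type*} [AddCommGroup G] {r : ℕ} {e : Fin r → G} {m : Fin r} {c : Fin r → ℤ} {f : G}

theorem IsBasisTuple.ne_zero_of_isCoprime (he : IsBasisTuple e) (hf : ∑ i, c i • e i = f)
    (hcop : IsCoprime (addOrderOf (e m) : ℤ) (c m)) : f ≠ 0 := by
  rintro rfl
  have hunit : IsUnit (addOrderOf (e m) : ℤ) :=
    hcop.isUnit_of_dvd' dvd_rfl (addOrderOf_dvd_iff_zsmul_eq_zero.mpr (he.2.1 c hf m))
  exact he.1 m (AddMonoid.addOrderOf_eq_one_iff.mp (Nat.isUnit_iff.mp (Int.ofNat_isUnit.mp hunit)))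

theorem IsBasisTuple.closure_update_of_isCoprime (he : IsBasisTuple e) (hf : ∑ i, c i • e i = f)
    (hcop : IsCoprime (addOrderOf (e m) : ℤ) (c m)) :
    AddSubgroup.closure (Set.range (update e m f)) = ⊤ := by
  rw [eq_top_iff, ← he.2.2, AddSubgroup.closure_le]
  rintro _ ⟨i, rfl⟩
  rcases eq_or_ne i m with rfl | hi
  · have hcm : c i • e i ∈ AddSubgroup.closure (Set.range (update e i f)) := by
      have : c i • e i = f - ∑ j, update c i 0 j • update e i f j := by
        rw [sum_update_zero_zsmul_update, ← hf, sum_zsmul_eq_add_sum_update_zero e c i]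
        abel
      rw [this]
      exact sub_mem (AddSubgroup.subset_closure ⟨i, update_self i f e⟩)
        (AddSubgroup.mem_closure_range_iff_of_fintype.mpr ⟨_, rfl⟩)
    obtain ⟨a, b, hab⟩ := hcop
    have hei : e i = b • c i • e i :=
      calc e i = (a * addOrderOf (e i) + b * c i) • e i := by rw [hab, one_smul]
        _ = b • c i • e i := by
          rw [add_smul, mul_smul, mul_smul, natCast_zsmul, addOrderOf_nsmul_eq_zero, smul_zero,
            zero_add]
    rw [SetLike.mem_coe, hei]
    exact AddSubgroup.zsmul_mem _ hcm b
  · exact AddSubgroup.subset_closure ⟨i, update_of_ne hi f e⟩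

theorem IsBasisTuple.update_of_isCoprime (he : IsBasisTuple e) (hf : ∑ i, c i • e i = f)
    (hcop : IsCoprime (addOrderOf (e m) : ℤ) (c m)) (hord : addOrderOf f ∣ addOrderOf (e m)) :
    IsBasisTuple (update e m f) := by
  refine ⟨fun i ↦ ?_, fun n hn i ↦ ?_, he.closure_update_of_isCoprime hf hcop⟩
  · rcases eq_or_ne i m with rfl | hi
    · simpa using he.ne_zero_of_isCoprime hf hcop
    · simpa [hi] using he.1 i
  rw [sum_zsmul_eq_add_sum_update_zero _ n m, update_self, sum_update_zero_zsmul_update] at hn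
  have hrel : ∑ i, (n m * c i + update n m 0 i) • e i = 0 := by
    simpa [add_smul, Finset.sum_add_distrib, mul_smul, ← Finset.smul_sum, hf] using hn
  have hdvd : (addOrderOf (e m) : ℤ) ∣ n m := by
    have hm := he.2.1 _ hrel m
    rw [update_self, add_zero, ← addOrderOf_dvd_iff_zsmul_eq_zero] at hm
    exact hcop.dvd_of_dvd_mul_right hm
  have hnf : n m • f = 0 :=
    addOrderOf_dvd_iff_zsmul_eq_zero.mp ((Int.natCast_dvd_natCast.mpr hord).trans hdvd)
  rcases eq_or_ne i m with rfl | hi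
  · simpa using hnf
  · rw [hnf, zero_add] at hn
    simpa [hi] using he.2.1 _ hn i

end BasisExchange

theorem stmt11_general {G : Type*} [AddCommGroup G] {r : ℕ} (e : Fin r → G)
    (t : Fin r → ℕ)
    (hord : ∀ i, addOrderOf (e i) = 2 ^ t i)
    (hbasis : IsBasisTuple e)
    (m : Fin r) (k : ℕ) (hk : Odd k) (α : G)
    (hα : α ∈ AddSubgroup.closure (Set.range (Function.update e m (2 • e m))))
    (hαord : addOrderOf α ≤ 2 ^ t m) :
    IsBasisTuple (Function.update e m (k • e m + α)) := by
  obtain ⟨c, hcm, rfl⟩ := exists_even_of_mem_closure_update_two_nsmul hα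
  have htwo : ⊤ ≤ AddCommGroup.primaryComponent G 2 := by
    rw [← hbasis.2.2, AddSubgroup.closure_le]
    rintro _ ⟨i, rfl⟩
    exact AddCommGroup.mem_primaryComponent_iff_addOrderOf.mpr ⟨t i, hord i⟩
  have hαdvd := addOrderOf_dvd_prime_pow_of_le (htwo (AddSubgroup.mem_top _)) hαord
  refine hbasis.update_of_isCoprime (c := update c m (k + c m)) ?_ ?_ ?_
  · rw [sum_zsmul_eq_add_sum_update_zero e _ m, sum_zsmul_eq_add_sum_update_zero e c m]
    simp [add_smul, add_assoc]
  · rw [hord, update_self, Nat.cast_pow]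
    exact (Int.isCoprime_two_left.mpr ((hk.natCast (R := ℤ)).add_even hcm)).pow_left
  · rw [hord, addOrderOf_dvd_iff_nsmul_eq_zero, nsmul_add, smul_comm, ← hord,
      addOrderOf_nsmul_eq_zero, smul_zero, zero_add, hord m]
    exact addOrderOf_dvd_iff_nsmul_eq_zero.mp hαdvd

theorem stmt11 {G : Type*} [AddCommGroup G] [Fintype G] {r : ℕ} (e : Fin r → G)
    (t : Fin r → ℕ) (ht : StrictMono t) (ht1 : ∀ i, 1 ≤ t i)
    (hord : ∀ i, addOrderOf (e i) = 2 ^ t i)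
    (hbasis : IsBasisTuple e)
    (m : Fin r) (k : ℕ) (hk : Odd k) (α : G)
    (hα : α ∈ AddSubgroup.closure (Set.range (Function.update e m (2 • e m))))
    (hαord : addOrderOf α ≤ 2 ^ t m) :
    IsBasisTuple (Function.update e m (k • e m + α)) :=
  stmt11_general e t hord hbasis m k hk α hα hαord
end

section
/- Let G be a finite abelian group, Γ ⊆ Aut(G) a subgroup, and S₁, S₂ nonempty sequences over G. Then S₁ and S₂ are ℬ_Γ(G)-equivalent in ℱ(G) (i.e., for all T ∈ ℱ(G), TS₁ ∈ ℬ_Γ(G) iff TS₂ ∈ ℬ_Γ(G)) if and only if σ_Γ(S₁) = σ_Γ(S₂). -/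
/-!
The Γ-weighted sums of `TS` are the sums `t + s` with `t ∈ σ_Γ(T)` and `s ∈ σ_Γ(S)`, so whether
`TS` is a weighted zero-sum sequence depends on `S` only through `σ_Γ(S)`. Conversely, testing
against the one-term sequence `T = -x` detects exactly whether `x ∈ σ_Γ(S)`: a zero sum
`γ(-x) + s = 0` gives `γ x ∈ σ_Γ(S)`, and applying `γ⁻¹ ∈ Γ` to the weights returns `x`.
-/

open Pointwise

lemma Multiset.exists_eq_add_of_map_eq_add {α β : Type*} (f : α → β) {T : Multiset α}
    {A B : Multiset β} (h : T.map f = A + B) :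
    ∃ TA TB : Multiset α, T = TA + TB ∧ TA.map f = A ∧ TB.map f = B := by
  classical
  induction A using Multiset.induction generalizing T with
  | empty => exact ⟨0, T, by simp, by simp, by simpa using h⟩
  | cons a A ih =>
    rw [Multiset.cons_add] at h
    obtain ⟨x, hx, hfx, hrest⟩ := (Multiset.map_eq_cons f T (A + B) a).2 h
    obtain ⟨TA, TB, hT, hA, hB⟩ := ih hrest
    refine ⟨x ::ₘ TA, TB, ?_, by simp [hA, hfx], hB⟩
    rw [Multiset.cons_add, ← hT, Multiset.cons_erase hx]

section WeightedSums

variable {G : Type*} [AddCommGroup G] (Γ : Set (G →+ G))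

lemma isWZS_iff_zero_mem_sigmaSet (S : Multiset G) : IsWZS Γ S ↔ (0 : G) ∈ sigmaSet Γ S :=
  Iff.rfl

lemma sigmaSet_add (A B : Multiset G) : sigmaSet Γ (A + B) = sigmaSet Γ A + sigmaSet Γ B := by
  ext x
  constructor
  · rintro ⟨T, hΓ, hmap, rfl⟩
    obtain ⟨TA, TB, rfl, hA, hB⟩ := Multiset.exists_eq_add_of_map_eq_add Prod.fst hmap
    refine ⟨_, ⟨TA, fun p hp => hΓ p (Multiset.mem_add.2 (.inl hp)), hA, rfl⟩,
      _, ⟨TB, fun p hp => hΓ p (Multiset.mem_add.2 (.inr hp)), hB, rfl⟩, ?_⟩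
    rw [Multiset.map_add, Multiset.sum_add]
  · rintro ⟨_, ⟨TA, hΓA, rfl, rfl⟩, _, ⟨TB, hΓB, rfl, rfl⟩, rfl⟩
    refine ⟨TA + TB, fun p hp => ?_, Multiset.map_add _ _ _, ?_⟩
    · exact (Multiset.mem_add.1 hp).elim (hΓA p) (hΓB p)
    · rw [Multiset.map_add, Multiset.sum_add]

lemma sigmaSet_singleton (g : G) : sigmaSet Γ {g} = (fun γ : G →+ G => γ g) '' Γ := by
  ext x
  constructor
  · rintro ⟨T, hΓ, hmap, rfl⟩
    obtain ⟨p, rfl, rfl⟩ := Multiset.map_eq_singleton.1 hmap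
    exact ⟨p.2, hΓ p (Multiset.mem_singleton_self p), by simp⟩
  · rintro ⟨γ, hγ, rfl⟩
    exact ⟨{(g, γ)}, by simpa using hγ, by simp, by simp⟩

lemma map_mem_sigmaSet (hComp : ∀ γ ∈ Γ, ∀ δ ∈ Γ, γ.comp δ ∈ Γ) {γ : G →+ G} (hγ : γ ∈ Γ)
    {S : Multiset G} {x : G} (hx : x ∈ sigmaSet Γ S) : γ x ∈ sigmaSet Γ S := by
  obtain ⟨T, hΓ, hmap, rfl⟩ := hx
  refine ⟨T.map fun p => (p.1, γ.comp p.2), ?_, by rw [Multiset.map_map]; exact hmap, ?_⟩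
  · intro p hp
    obtain ⟨q, hq, rfl⟩ := Multiset.mem_map.1 hp
    exact hComp γ hγ q.2 (hΓ q hq)
  · rw [map_multiset_sum, Multiset.map_map, Multiset.map_map]
    rfl

lemma mem_sigmaSet_iff_isWZS_neg_add (hId : AddMonoidHom.id G ∈ Γ)
    (hComp : ∀ γ ∈ Γ, ∀ δ ∈ Γ, γ.comp δ ∈ Γ)
    (hInv : ∀ γ ∈ Γ, ∃ δ ∈ Γ, δ.comp γ = AddMonoidHom.id G) (S : Multiset G) (x : G) :
    x ∈ sigmaSet Γ S ↔ IsWZS Γ ({-x} + S) := by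
  rw [isWZS_iff_zero_mem_sigmaSet, sigmaSet_add, sigmaSet_singleton]
  constructor
  · intro hx
    exact ⟨-x, ⟨_, hId, rfl⟩, x, hx, neg_add_cancel x⟩
  · rintro ⟨_, ⟨γ, hγ, rfl⟩, s, hs, hsum⟩
    obtain rfl : γ x = s := neg_add_eq_zero.1 (by simpa only [map_neg] using hsum)
    obtain ⟨δ, hδ, hδγ⟩ := hInv γ hγ
    simpa [← AddMonoidHom.comp_apply, hδγ] using map_mem_sigmaSet Γ hComp hδ hs

end WeightedSums

theorem stmt12_general {G : Type*} [AddCommGroup G] (Γ : Set (G →+ G))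
    (hId : AddMonoidHom.id G ∈ Γ)
    (hComp : ∀ γ ∈ Γ, ∀ δ ∈ Γ, γ.comp δ ∈ Γ)
    (hInv : ∀ γ ∈ Γ, ∃ δ ∈ Γ, δ.comp γ = AddMonoidHom.id G)
    (S₁ S₂ : Multiset G) :
    (∀ T : Multiset G, IsWZS Γ (T + S₁) ↔ IsWZS Γ (T + S₂))
      ↔ sigmaSet Γ S₁ = sigmaSet Γ S₂ := by
  constructor
  · intro h
    ext x
    simpa only [mem_sigmaSet_iff_isWZS_neg_add Γ hId hComp hInv] using h {-x}
  · intro h T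
    rw [isWZS_iff_zero_mem_sigmaSet, isWZS_iff_zero_mem_sigmaSet, sigmaSet_add, sigmaSet_add, h]

theorem stmt12 {G : Type*} [AddCommGroup G] [Fintype G] (Γ : Set (G →+ G))
    (hAut : ∀ γ ∈ Γ, Function.Bijective ⇑γ)
    (hId : AddMonoidHom.id G ∈ Γ)
    (hComp : ∀ γ ∈ Γ, ∀ δ ∈ Γ, γ.comp δ ∈ Γ)
    (hInv : ∀ γ ∈ Γ, ∃ δ ∈ Γ, δ.comp γ = AddMonoidHom.id G)
    (S₁ S₂ : Multiset G) (h1 : S₁ ≠ 0) (h2 : S₂ ≠ 0) :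
    (∀ T : Multiset G, IsWZS Γ (T + S₁) ↔ IsWZS Γ (T + S₂))
      ↔ sigmaSet Γ S₁ = sigmaSet Γ S₂ :=
  stmt12_general Γ hId hComp hInv S₁ S₂
end

section
/- Let G be a finite abelian group. Then the catenary degree of ℬ_±(G) is at most 2 (equivalently, ℬ_±(G) is half-factorial, i.e., its set of distances is empty) if and only if |G| ≤ 2. -/
section PlusMinus

variable {G : Type*} [AddCommGroup G]

lemma apply_eq_or_eq_neg_of_mem_pmWeights {f : G →+ G} (hf : f ∈ pmWeights G) (g : G) :
    f g = g ∨ f g = -g := by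
  rcases hf with rfl | rfl <;> simp

lemma isWZS_pmWeights_add_of_sum_eq_s15 {S T : Multiset G} (h : S.sum = T.sum) :
    IsWZS (pmWeights G) (S + T) := by
  refine ⟨S.map (·, AddMonoidHom.id G) + T.map (·, -AddMonoidHom.id G), ?_, ?_, ?_⟩
  · simp only [Multiset.mem_add, Multiset.mem_map]
    rintro _ (⟨g, -, rfl⟩ | ⟨g, -, rfl⟩)
    exacts [Or.inl rfl, Or.inr rfl]
  · simp [Multiset.map_map]
  · simp [Multiset.map_map, Function.comp_def, Multiset.sum_map_neg', h]

lemma IsWZS.sum_eq_zero_of_neg_eq_self (hneg : ∀ g : G, -g = g) {S : Multiset G}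
    (hS : IsWZS (pmWeights G) S) : S.sum = 0 := by
  obtain ⟨T, hΓ, rfl, hsum⟩ := hS
  rw [← hsum]
  refine congrArg Multiset.sum (Multiset.map_congr rfl fun p hp => ?_)
  rcases apply_eq_or_eq_neg_of_mem_pmWeights (hΓ p hp) p.1 with h | h <;> simp [h, hneg]

lemma isWZS_pmWeights_iff_sum_eq_zero (hneg : ∀ g : G, -g = g) {S : Multiset G} :
    IsWZS (pmWeights G) S ↔ S.sum = 0 :=
  ⟨IsWZS.sum_eq_zero_of_neg_eq_self hneg, fun h => by
    simpa using isWZS_pmWeights_add_of_sum_eq_s15 (T := 0) h⟩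

lemma isWZS_pmWeights_singleton_iff {a : G} : IsWZS (pmWeights G) {a} ↔ a = 0 := by
  refine ⟨?_, fun h => by
    simpa [h] using isWZS_pmWeights_add_of_sum_eq_s15 (S := {(0 : G)}) (T := 0) (by simp)⟩
  rintro ⟨T, hΓ, hfst, hsum⟩
  obtain ⟨p, rfl⟩ := Multiset.card_eq_one.mp (by simpa using congrArg Multiset.card hfst)
  obtain rfl : p.1 = a := by simpa using hfst
  simp only [Multiset.map_singleton, Multiset.sum_singleton] at hsum
  rcases apply_eq_or_eq_neg_of_mem_pmWeights (hΓ p (Multiset.mem_singleton_self p)) p.1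
    with h | h <;> simpa [h] using hsum

lemma isAtomPM_of_card_le_three {S : Multiset G} (hS : IsWZS (pmWeights G) S) (hS0 : S ≠ 0)
    (h0 : (0 : G) ∉ S) (hcard : S.card ≤ 3) : IsAtomPM S := by
  refine ⟨hS0, hS, fun A B hA hB hAB => ?_⟩
  subst hAB
  by_contra! hne
  have hsingleton : ∀ C ≤ A + B, IsWZS (pmWeights G) C → C.card ≠ 1 := by
    intro C hC hwzs hC1
    obtain ⟨c, rfl⟩ := Multiset.card_eq_one.mp hC1
    exact h0 (isWZS_pmWeights_singleton_iff.mp hwzs ▸ Multiset.singleton_le.mp hC)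
  have := hsingleton A le_self_add hA
  have := hsingleton B le_add_self hB
  have := Multiset.card_pos.mpr hne.1
  have := Multiset.card_pos.mpr hne.2
  simp only [Multiset.card_add] at hcard
  omega

lemma IsAtomPM.eq_of_le [DecidableEq G] (hneg : ∀ g : G, -g = g) {A B : Multiset G}
    (hA : IsAtomPM A) (hB0 : B ≠ 0) (hBA : B ≤ A) (hB : B.sum = 0) : B = A := by
  have hsplit : B + (A - B) = A := add_tsub_cancel_of_le hBA
  have hrest : (A - B).sum = 0 := by
    simpa [hB, hA.2.1.sum_eq_zero_of_neg_eq_self hneg] using congrArg Multiset.sum hsplit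
  rcases hA.2.2 B (A - B) ((isWZS_pmWeights_iff_sum_eq_zero hneg).mpr hB)
    ((isWZS_pmWeights_iff_sum_eq_zero hneg).mpr hrest) hsplit with h | h
  · exact absurd h hB0
  · exact le_antisymm hBA (tsub_eq_zero_iff_le.mp h)

lemma isAtomPM_pair {c : G} (hc : c ≠ 0) : IsAtomPM (c ::ₘ {c}) :=
  isAtomPM_of_card_le_three (by simpa using isWZS_pmWeights_add_of_sum_eq_s15 (S := {c}) rfl)
    (by simp) (by simp [hc.symm]) (by simp)

lemma isAtomPM_triple {a b : G} (ha : a ≠ 0) (hb : b ≠ 0) (hab : a + b ≠ 0) :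
    IsAtomPM (a ::ₘ b ::ₘ {a + b}) :=
  isAtomPM_of_card_le_three
    (by simpa using isWZS_pmWeights_add_of_sum_eq_s15 (S := {a, b}) (T := {a + b}) (by simp))
    (by simp) (by simp [ha.symm, hb.symm, hab.symm]) (by simp)

end PlusMinus

section AtMostOneNonzero

variable {G : Type*} [AddCommGroup G]

lemma card_le_two_iff_eq_of_ne_zero [Fintype G] :
    Fintype.card G ≤ 2 ↔ ∀ a b : G, a ≠ 0 → b ≠ 0 → a = b := by
  classical
  rw [← Finset.card_univ, show 2 = 1 + 1 from rfl, ← Nat.sub_le_iff_le_add,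
    ← Finset.card_erase_of_mem (Finset.mem_univ 0), Finset.card_le_one]
  simp only [Finset.mem_erase, Finset.mem_univ, and_true]
  exact ⟨fun h a b ha hb => h a ha b hb, fun h a ha b hb => h a b ha hb⟩

lemma exists_ne_zero_add_ne_zero {x y : G} (hx : x ≠ 0) (hy : y ≠ 0) (hxy : x ≠ y) :
    ∃ a b : G, a ≠ 0 ∧ b ≠ 0 ∧ a + b ≠ 0 := by
  by_cases hsum : x + y = 0
  · refine ⟨x, x, hx, hx, fun h => hxy ?_⟩
    exact add_left_cancel (h.trans hsum.symm)
  · exact ⟨x, y, hx, hy, hsum⟩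

variable (hG : ∀ a b : G, a ≠ 0 → b ≠ 0 → a = b)
include hG

lemma neg_eq_self_of_forall_ne_zero_eq (g : G) : -g = g := by
  by_cases hg : g = 0
  · simp [hg]
  · exact hG _ _ (neg_ne_zero.mpr hg) hg

lemma IsAtomPM.card_add_count_zero [DecidableEq G] {A : Multiset G} (hA : IsAtomPM A) :
    A.card + A.count 0 = 2 := by
  have hneg := neg_eq_self_of_forall_ne_zero_eq hG
  by_cases h0 : (0 : G) ∈ A
  · obtain rfl : {0} = A :=
      hA.eq_of_le hneg (Multiset.singleton_ne_zero 0) (Multiset.singleton_le.mpr h0) (by simp)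
    simp
  obtain ⟨a, ha⟩ := Multiset.exists_mem_of_ne_zero hA.1
  have ha0 : a ≠ 0 := fun h => h0 (h ▸ ha)
  have hcount : A.count a = A.card :=
    Multiset.count_eq_card.mpr fun b hb => hG a b ha0 fun h => h0 (h ▸ hb)
  have hcard : 2 ≤ A.card := by
    by_contra! hlt
    obtain ⟨b, rfl⟩ := (Multiset.card_eq_one (s := A)).mp (by
      have := Multiset.card_pos.mpr hA.1; omega)
    exact h0 (isWZS_pmWeights_singleton_iff.mp hA.2.1 ▸ Multiset.mem_singleton_self b)
  obtain rfl : Multiset.replicate 2 a = A :=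
    hA.eq_of_le hneg (by simp) (Multiset.le_count_iff_replicate_le.mp (hcount ▸ hcard))
      (by rw [Multiset.sum_replicate, two_nsmul, ← neg_add_cancel a, hneg])
  simp [ha0.symm]

lemma two_mul_length_eq_card_add_count_zero [DecidableEq G] (l : List (Multiset G))
    (hl : ∀ A ∈ l, IsAtomPM A) : 2 * l.length = l.sum.card + l.sum.count 0 := by
  induction l with
  | nil => simp
  | cons A l ih =>
    rw [List.forall_mem_cons] at hl
    have := hl.1.card_add_count_zero hG
    simp only [List.sum_cons, List.length_cons, Multiset.card_add, Multiset.count_add]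
    linarith [ih hl.2]

end AtMostOneNonzero

theorem stmt15 {G : Type*} [AddCommGroup G] [Fintype G] :
    (∀ l₁ l₂ : List (Multiset G), (∀ A ∈ l₁, IsAtomPM A) → (∀ A ∈ l₂, IsAtomPM A) →
      l₁.sum = l₂.sum → l₁.length = l₂.length) ↔ Fintype.card G ≤ 2 := by
  classical
  rw [card_le_two_iff_eq_of_ne_zero]
  refine ⟨fun h => ?_, fun hG l₁ l₂ h₁ h₂ hsum => ?_⟩
  · by_contra! ⟨x, y, hx, hy, hxy⟩
    obtain ⟨a, b, ha, hb, hab⟩ := exists_ne_zero_add_ne_zero hx hy hxy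
    have hlen := h [a ::ₘ b ::ₘ {a + b}, a ::ₘ b ::ₘ {a + b}]
      [a ::ₘ {a}, b ::ₘ {b}, (a + b) ::ₘ {a + b}]
      (by simp [isAtomPM_triple ha hb hab]) (by simp [isAtomPM_pair, ha, hb, hab])
      (by ext; simp [Multiset.count_cons]; omega)
    simp at hlen
  · have e₁ := two_mul_length_eq_card_add_count_zero hG l₁ h₁
    have e₂ := two_mul_length_eq_card_add_count_zero hG l₂ h₂
    rw [hsum] at e₁
    omega
end

section
/- Let G be cyclic of prime order p ≥ 3 and let S be a sequence over G∖{0} of length |S| ≥ p−1. Then σ_±(S) = G; in particular S ∈ ℬ_±(G). -/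
/-!
σ_±(S) is the iterated sumset of the pairs {g, -g}, g ∈ S. In a group of odd prime order p each
pair has two elements, so by Cauchy–Davenport every factor enlarges the sumset by at least one
element until it has p elements; p - 1 factors therefore fill the whole group, and 0 ∈ σ_±(S).
-/

open Pointwise Finset

lemma sigmaSet_zero_s17 {G : Type*} [AddCommGroup G] (Γ : Set (G →+ G)) :
    sigmaSet Γ (0 : Multiset G) = {0} := by
  ext x
  simp only [sigmaSet, Multiset.map_eq_zero, Set.mem_ofPred_eq, Set.mem_singleton_iff]
  constructor
  · rintro ⟨T, -, rfl, rfl⟩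
    simp
  · rintro rfl
    exact ⟨0, by simp, rfl, by simp⟩

lemma sigmaSet_cons {G : Type*} [AddCommGroup G] (Γ : Set (G →+ G)) (g : G)
    (S : Multiset G) :
    sigmaSet Γ (g ::ₘ S) = (fun f : G →+ G => f g) '' Γ + sigmaSet Γ S := by
  classical
  ext x
  constructor
  · rintro ⟨T, hΓ, hT, rfl⟩
    obtain ⟨q, hq, rfl, hS⟩ := (Multiset.map_eq_cons _ _ _ _).2 hT
    refine ⟨q.2 q.1, ⟨q.2, hΓ q hq, rfl⟩, _,
      ⟨T.erase q, fun p hp => hΓ p (Multiset.mem_of_mem_erase hp), hS, rfl⟩, ?_⟩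
    conv_rhs => rw [← Multiset.cons_erase hq]
    simp
  · intro hx
    obtain ⟨_, ⟨f, hf, rfl⟩, _, ⟨T, hΓ, rfl, rfl⟩, rfl⟩ := Set.mem_add.1 hx
    refine ⟨(g, f) ::ₘ T, ?_, by simp, by simp⟩
    simpa [hf] using hΓ

lemma image_pmWeights {G : Type*} [AddCommGroup G] (g : G) :
    (fun f : G →+ G => f g) '' pmWeights G = {g, -g} := by
  simp [pmWeights, Set.image_pair]

lemma card_le_minOrder_of_prime {G : Type*} [AddCommGroup G] [Fintype G]
    (hp : (Fintype.card G).Prime) : (Fintype.card G : ℕ∞) ≤ AddMonoid.minOrder G := by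
  rw [AddMonoid.le_minOrder]
  intro a ha _
  rcases hp.eq_one_or_self_of_dvd _ addOrderOf_dvd_card with h | h
  · exact absurd (AddMonoid.addOrderOf_eq_one_iff.1 h) ha
  · rw [h]

lemma neg_ne_self_of_two_lt_minOrder {G : Type*} [AddCommGroup G]
    (h : 2 < AddMonoid.minOrder G) {g : G} (hg : g ≠ 0) : -g ≠ g := by
  intro hneg
  have h2g : 2 • g = 0 := by rw [two_nsmul, ← neg_add_cancel g, hneg]
  have hord : addOrderOf g ≤ 2 := Nat.le_of_dvd two_pos (addOrderOf_dvd_of_nsmul_eq_zero h2g)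
  have hmin := AddMonoid.minOrder_le_addOrderOf hg
    (isOfFinAddOrder_iff_nsmul_eq_zero.2 ⟨2, two_pos, h2g⟩)
  exact absurd (hmin.trans (by exact_mod_cast hord)) h.not_ge

section PmSumset

variable {G : Type*} [AddCommGroup G] [DecidableEq G]

def pmSumset (S : Multiset G) : Finset G := (S.map fun g => ({g, -g} : Finset G)).sum

@[simp]
lemma pmSumset_zero : pmSumset (0 : Multiset G) = {0} := by simp [pmSumset, singleton_zero]

@[simp]
lemma pmSumset_cons (g : G) (S : Multiset G) :
    pmSumset (g ::ₘ S) = {g, -g} + pmSumset S := by simp [pmSumset]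

lemma coe_pmSumset (S : Multiset G) : (pmSumset S : Set G) = sigmaSet (pmWeights G) S := by
  induction S using Multiset.induction_on with
  | empty => simp [sigmaSet_zero_s17]
  | cons g S ih => simp [sigmaSet_cons, image_pmWeights, ih]

lemma pmSumset_nonempty (S : Multiset G) : (pmSumset S).Nonempty := by
  induction S using Multiset.induction_on with
  | empty => simp
  | cons g S ih => simpa using ih

lemma min_le_card_pmSumset {p : ℕ} (hp : (p : ℕ∞) ≤ AddMonoid.minOrder G) {S : Multiset G}
    (hS : ∀ g ∈ S, -g ≠ g) : min p (Multiset.card S + 1) ≤ #(pmSumset S) := by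
  induction S using Multiset.induction_on with
  | empty => simp
  | cons g S ih =>
    have ih := ih fun x hx => hS x (Multiset.mem_cons_of_mem hx)
    have hpair : #({g, -g} : Finset G) = 2 := card_pair (hS g (Multiset.mem_cons_self g S)).symm
    have hCD := cauchy_davenport_minOrder_add (insert_nonempty g {-g}) (pmSumset_nonempty S)
    have hCD' : min p (#({g, -g} : Finset G) + #(pmSumset S) - 1) ≤
        #({g, -g} + pmSumset S) := by
      simpa only [min_le_iff, Nat.cast_le] using (min_le_min_right _ hp).trans hCD
    rw [pmSumset_cons, Multiset.card_cons]
    omega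

end PmSumset

theorem stmt17 {G : Type*} [AddCommGroup G] [Fintype G]
    (hp : (Fintype.card G).Prime) (h3 : 3 ≤ Fintype.card G)
    (S : Multiset G) (hS0 : ∀ x ∈ S, x ≠ (0 : G))
    (hlen : Fintype.card G - 1 ≤ Multiset.card S) :
    sigmaSet (pmWeights G) S = Set.univ ∧ IsWZS (pmWeights G) S := by
  classical
  have hmin := card_le_minOrder_of_prime hp
  have hS : ∀ g ∈ S, -g ≠ g := fun g hg =>
    neg_ne_self_of_two_lt_minOrder (lt_of_lt_of_le (by exact_mod_cast h3) hmin) (hS0 g hg)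
  have hcard := min_le_card_pmSumset hmin hS
  have huniv : pmSumset S = univ := eq_univ_of_card _ (by have := card_le_univ (pmSumset S); omega)
  have hsigma : sigmaSet (pmWeights G) S = Set.univ := by rw [← coe_pmSumset, huniv, coe_univ]
  exact ⟨hsigma, show (0 : G) ∈ sigmaSet (pmWeights G) S by simp [hsigma]⟩
end
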